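/- arXiv:1212.5946 — 10 statements merged into one kernel-verified Lean document; each statement's English description precedes it below -/
import Mathlib

section
/- The volume of the oblique cylinder, i.e., the convex hull of the disks {(x,y,0) : x²+y² ≤ 1} and {(x,y,b) : x²+(y-a)² ≤ 1} with a ≥ 0 and b > 0, equals πb. -/
/-!
Shearing `(x, y, z) ↦ (x, y - (a / b) z, z)` is a linear, volume-preserving bijection taking
the two disks to the disks of the right circular cylinder `D × {0, b}` over the unit disk `D`.
Convex hulls commute with linear bijections and with products, so the solid is the preimage of
`D × [0, b]` under the shear, whose volume is `π b` by Fubini.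
-/

open MeasureTheory Real Set

theorem LinearEquiv.preimage_convexHull {𝕜 E F : Type*} [Field 𝕜] [LinearOrder 𝕜]
    [IsStrictOrderedRing 𝕜] [AddCommGroup E] [Module 𝕜 E] [AddCommGroup F] [Module 𝕜 F]
    (e : E ≃ₗ[𝕜] F) (s : Set F) : e ⁻¹' convexHull 𝕜 s = convexHull 𝕜 (e ⁻¹' s) := by
  rw [← e.image_symm_eq_preimage, ← e.image_symm_eq_preimage]
  exact e.symm.toLinearMap.image_convexHull s

section Shear

variable {E : Type*}

def shear [AddCommGroup E] [Module ℝ E] (w : E) : (E × ℝ) ≃ₗ[ℝ] E × ℝ where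
  toFun p := (p.1 - p.2 • w, p.2)
  invFun p := (p.1 + p.2 • w, p.2)
  map_add' p q := by ext <;> simp only [Prod.fst_add, Prod.snd_add, add_smul]; abel
  map_smul' r p := by ext <;> simp [smul_sub, mul_smul]
  left_inv p := by simp
  right_inv p := by simp

theorem convexHull_union_translate_eq_preimage_shear [AddCommGroup E] [Module ℝ E] {D : Set E}
    (hD : Convex ℝ D) (v : E) {h : ℝ} (hh : h ≠ 0) :
    convexHull ℝ ({p : E × ℝ | p.1 ∈ D ∧ p.2 = 0} ∪ {p | p.1 - v ∈ D ∧ p.2 = h}) =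
      shear (h⁻¹ • v) ⁻¹' (D ×ˢ uIcc 0 h) := by
  have hslices : {p : E × ℝ | p.1 ∈ D ∧ p.2 = 0} ∪ {p | p.1 - v ∈ D ∧ p.2 = h} =
      shear (h⁻¹ • v) ⁻¹' (D ×ˢ {0, h}) := by
    ext ⟨x, t⟩
    simp only [shear, mem_union, mem_ofPred_eq, mem_preimage, LinearEquiv.coe_mk,
      LinearMap.coe_mk, AddHom.coe_mk, mem_prod, mem_insert_iff, mem_singleton_iff]
    constructor
    · rintro (⟨hx, rfl⟩ | ⟨hx, rfl⟩) <;> simp_all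
    · rintro ⟨hx, rfl | rfl⟩ <;> simp_all
  rw [hslices, ← LinearEquiv.preimage_convexHull, convexHull_prod, hD.convexHull_eq,
    convexHull_pair, segment_eq_uIcc]

variable [NormedAddCommGroup E] [NormedSpace ℝ E] [MeasurableSpace E] [BorelSpace E]

theorem measurePreserving_shear (μ : Measure E) [SFinite μ] [μ.IsAddRightInvariant]
    (ν : Measure ℝ) [SFinite ν] (w : E) : MeasurePreserving (shear w) (μ.prod ν) (μ.prod ν) := by
  have hskew : MeasurePreserving (fun p : ℝ × E => (p.1, p.2 - p.1 • w)) (ν.prod μ) (ν.prod μ) :=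
    (MeasurePreserving.id ν).skew_product (g := fun t x => x - t • w)
      (by fun_prop : Continuous fun p : ℝ × E => p.2 - p.1 • w).measurable
      (.of_forall fun t => (measurePreserving_sub_right μ (t • w)).map_eq)
  exact Measure.measurePreserving_swap.comp (hskew.comp Measure.measurePreserving_swap)

end Shear

def unitDisk : Set (ℝ × ℝ) := {q | q.1 ^ 2 + q.2 ^ 2 ≤ 1}

theorem unitDisk_eq_preimage_closedBall :
    unitDisk = Complex.equivRealProdCLM.symm ⁻¹' Metric.closedBall 0 1 := by
  ext q
  simp [unitDisk, Complex.norm_def, Complex.normSq_apply, ← sq]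

theorem convex_unitDisk : Convex ℝ unitDisk := by
  rw [unitDisk_eq_preimage_closedBall]
  exact (convex_closedBall 0 1).linear_preimage Complex.equivRealProdCLM.symm.toLinearMap

theorem measurableSet_unitDisk : MeasurableSet unitDisk := by
  rw [unitDisk_eq_preimage_closedBall]
  exact measurableSet_closedBall.preimage (by fun_prop)

theorem volume_unitDisk : volume unitDisk = ENNReal.ofReal π := by
  rw [unitDisk_eq_preimage_closedBall]
  refine (Complex.volume_preserving_equiv_real_prod.symm.measure_preimage_equiv _).trans ?_
  simp [Complex.volume_closedBall, ← NNReal.coe_real_pi, ENNReal.ofReal_coe_nnreal]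

theorem oblique_cylinder_volume_general (a b : ℝ) (hb : 0 < b) :
    volume (convexHull ℝ
      ({p : ℝ × ℝ × ℝ | p.1 ^ 2 + p.2.1 ^ 2 ≤ 1 ∧ p.2.2 = 0} ∪
       {p : ℝ × ℝ × ℝ | p.1 ^ 2 + (p.2.1 - a) ^ 2 ≤ 1 ∧ p.2.2 = b})) =
    ENNReal.ofReal (π * b) := by
  set U := {p : ℝ × ℝ × ℝ | p.1 ^ 2 + p.2.1 ^ 2 ≤ 1 ∧ p.2.2 = 0} ∪
    {p : ℝ × ℝ × ℝ | p.1 ^ 2 + (p.2.1 - a) ^ 2 ≤ 1 ∧ p.2.2 = b}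
  have hU : LinearEquiv.prodAssoc ℝ ℝ ℝ ℝ ⁻¹' U =
      {p | p.1 ∈ unitDisk ∧ p.2 = 0} ∪ {p | p.1 - (0, a) ∈ unitDisk ∧ p.2 = b} := by
    ext; simp [U, unitDisk]
  calc volume (convexHull ℝ U)
      = volume (MeasurableEquiv.prodAssoc ⁻¹' convexHull ℝ U) :=
        ((measurePreserving_prodAssoc volume volume volume).measure_preimage_equiv _).symm
    _ = volume (shear (b⁻¹ • ((0 : ℝ), a)) ⁻¹' (unitDisk ×ˢ uIcc 0 b)) := by
        change volume (LinearEquiv.prodAssoc ℝ ℝ ℝ ℝ ⁻¹' _) = _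
        rw [LinearEquiv.preimage_convexHull, hU,
          convexHull_union_translate_eq_preimage_shear convex_unitDisk _ hb.ne']
    _ = volume unitDisk * volume (uIcc 0 b) := by
        rw [Measure.volume_eq_prod, (measurePreserving_shear _ _ _).measure_preimage
          (measurableSet_unitDisk.prod measurableSet_uIcc).nullMeasurableSet, Measure.prod_prod]
    _ = ENNReal.ofReal (π * b) := by
        rw [volume_unitDisk, uIcc_of_le hb.le, Real.volume_Icc, sub_zero,
          ENNReal.ofReal_mul pi_nonneg]

theorem oblique_cylinder_volume (a b : ℝ) (ha : 0 ≤ a) (hb : 0 < b) :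
    volume (convexHull ℝ
      ({p : ℝ × ℝ × ℝ | p.1 ^ 2 + p.2.1 ^ 2 ≤ 1 ∧ p.2.2 = 0} ∪
       {p : ℝ × ℝ × ℝ | p.1 ^ 2 + (p.2.1 - a) ^ 2 ≤ 1 ∧ p.2.2 = b})) =
    ENNReal.ofReal (π * b) :=
  oblique_cylinder_volume_general a b hb
end

section
/- For a ≥ 0 and b > 0, ∫_{-1}^{1} √((a²v² + b²)/(1 - v²)) dv = 2√(a²+b²) · E(a²/(a²+b²)), where E(μ) = ∫_0^{π/2} √(1 - μ sin²θ) dθ is the complete elliptic integral of the second kind. -/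
open Real MeasureTheory Set

lemma sin_image_Ioo : Real.sin '' Set.Ioo (-(π/2)) (π/2) = Set.Ioo (-1 : ℝ) 1 := by
  ext x
  constructor
  · rintro ⟨θ, ⟨h1, h2⟩, rfl⟩
    have hpi : (0:ℝ) < π / 2 := by positivity
    have hmem : θ ∈ Set.Icc (-(π/2)) (π/2) := ⟨h1.le, h2.le⟩
    constructor
    · have := Real.strictMonoOn_sin ⟨le_refl _, by linarith⟩ hmem h1
      simpa [Real.sin_pi_div_two] using this
    · have := Real.strictMonoOn_sin hmem ⟨by linarith, le_refl _⟩ h2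
      simpa [Real.sin_pi_div_two] using this
  · rintro ⟨h1, h2⟩
    exact ⟨Real.arcsin x, ⟨Real.neg_pi_div_two_lt_arcsin.2 h1,
      Real.arcsin_lt_pi_div_two.2 h2⟩, Real.sin_arcsin h1.le h2.le⟩

theorem oblique_cylinder_lateral_area (a b : ℝ) (ha : 0 ≤ a) (hb : 0 < b) :
    ∫ v in (-1:ℝ)..1, Real.sqrt ((a ^ 2 * v ^ 2 + b ^ 2) / (1 - v ^ 2)) =
      2 * Real.sqrt (a ^ 2 + b ^ 2) *
        ∫ θ in (0:ℝ)..(π / 2),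
          Real.sqrt (1 - (a ^ 2 / (a ^ 2 + b ^ 2)) * Real.sin θ ^ 2) := by
  have hab : (0:ℝ) < a ^ 2 + b ^ 2 := by positivity
  set μ : ℝ := a ^ 2 / (a ^ 2 + b ^ 2) with hμ
  set g : ℝ → ℝ := fun v => Real.sqrt ((a ^ 2 * v ^ 2 + b ^ 2) / (1 - v ^ 2)) with hg
  set f : ℝ → ℝ := fun θ => Real.sqrt (a ^ 2 + b ^ 2) * Real.sqrt (1 - μ * Real.cos θ ^ 2)
    with hf
  have hfcont : Continuous f := by
    apply Continuous.mul continuous_const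
    exact Real.continuous_sqrt.comp (by continuity)
  -- Step 1: change of variable v = sin θ
  have step1 : ∫ v in Set.Ioo (-1:ℝ) 1, g v = ∫ θ in Set.Ioo (-(π/2)) (π/2), f θ := by
    rw [← sin_image_Ioo]
    rw [MeasureTheory.integral_image_eq_integral_abs_deriv_smul measurableSet_Ioo
      (fun x _ => (Real.hasDerivAt_sin x).hasDerivWithinAt)
      (Real.injOn_sin.mono (Set.Ioo_subset_Icc_self)) g]
    apply MeasureTheory.setIntegral_congr_fun measurableSet_Ioo
    intro θ hθ
    have hcos : 0 < Real.cos θ := Real.cos_pos_of_mem_Ioo hθ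
    have hsin2 : 1 - Real.sin θ ^ 2 = Real.cos θ ^ 2 := by
      rw [← Real.sin_sq_add_cos_sq θ]; ring
    have hnum : (a ^ 2 + b ^ 2) * (1 - μ * Real.cos θ ^ 2)
        = a ^ 2 * Real.sin θ ^ 2 + b ^ 2 := by
      rw [hμ]
      field_simp
      nlinarith [Real.sin_sq_add_cos_sq θ]
    simp only [smul_eq_mul, hg, hf]
    rw [hsin2, Real.sqrt_div (by positivity) _, Real.sqrt_sq hcos.le,
      abs_of_pos hcos, ← Real.sqrt_mul hab.le, hnum]
    field_simp
  -- Step 2: evenness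
  have hint : ∀ (c d : ℝ), IntervalIntegrable f volume c d :=
    fun c d => hfcont.intervalIntegrable c d
  have step2 : ∫ θ in Set.Ioo (-(π/2)) (π/2), f θ = 2 * ∫ θ in (0:ℝ)..(π/2), f θ := by
    rw [← MeasureTheory.integral_Ioc_eq_integral_Ioo,
      ← intervalIntegral.integral_of_le (by linarith [Real.pi_pos] : -(π/2) ≤ π/2),
      ← intervalIntegral.integral_add_adjacent_intervals (hint (-(π/2)) 0) (hint 0 (π/2))]
    have : ∫ θ in (-(π/2))..(0:ℝ), f θ = ∫ θ in (0:ℝ)..(π/2), f θ := by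
      have h := intervalIntegral.integral_comp_neg (a := 0) (b := π/2) f
      rw [neg_zero] at h
      rw [← h]
      exact intervalIntegral.integral_congr (fun x _ => by simp [hf, Real.cos_neg])
    rw [this]; ring
  -- Step 3: cos² to sin²
  have step3 : ∫ θ in (0:ℝ)..(π/2), f θ
      = Real.sqrt (a ^ 2 + b ^ 2) * ∫ θ in (0:ℝ)..(π/2), Real.sqrt (1 - μ * Real.sin θ ^ 2) := by
    rw [← intervalIntegral.integral_const_mul]
    have : ∀ x, Real.sqrt (a^2+b^2) * Real.sqrt (1 - μ * Real.sin x ^ 2) = f (π/2 - x) := by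
      intro x; simp [hf, Real.cos_pi_div_two_sub]
    rw [intervalIntegral.integral_congr (fun x _ => this x),
      intervalIntegral.integral_comp_sub_left f (π/2)]
    norm_num
  calc ∫ v in (-1:ℝ)..1, g v
      = ∫ v in Set.Ioo (-1:ℝ) 1, g v := by
        rw [intervalIntegral.integral_of_le (by norm_num : (-1:ℝ) ≤ 1),
          MeasureTheory.integral_Ioc_eq_integral_Ioo]
    _ = 2 * Real.sqrt (a ^ 2 + b ^ 2) *
        ∫ θ in (0:ℝ)..(π / 2), Real.sqrt (1 - μ * Real.sin θ ^ 2) := by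
        rw [step1, step2, step3]; ring
end

section
/- For a ≥ 0 and b > 0, ∫_{-1}^{1} (a²+b²)·b / ((a²v² + b²)·√(1 - v²)) dv = π√(a²+b²). -/
/-! An antiderivative of the integrand on `(-1, 1)` is `c · arcsin (c v / √(a²v² + b²))` with
`c = √(a² + b²)`: the identity `(a²v² + b²) - (a²+b²) v² = b² (1 - v²)` turns the derivative
of `arcsin` into the factor `√(1 - v²)` of the integrand. The argument of `arcsin` runs from `-1`
to `1`, so the integral is `c · π`. -/

open Real Set intervalIntegral MeasureTheory

section

variable {a b : ℝ}

theorem hasDerivAt_mul_div_sqrt_sq_mul_sq_add_sq (c : ℝ) (hb : b ≠ 0) (v : ℝ) :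
    HasDerivAt (fun v => c * v / √(a ^ 2 * v ^ 2 + b ^ 2))
      (c * b ^ 2 / ((a ^ 2 * v ^ 2 + b ^ 2) * √(a ^ 2 * v ^ 2 + b ^ 2))) v := by
  have hpos : 0 < a ^ 2 * v ^ 2 + b ^ 2 := by positivity
  have hq : HasDerivAt (fun v => a ^ 2 * v ^ 2 + b ^ 2) (a ^ 2 * (2 * v)) v := by
    simpa using ((hasDerivAt_pow 2 v).const_mul (a ^ 2)).add_const (b ^ 2)
  have hquot := ((hasDerivAt_id v).const_mul c).div (hq.sqrt hpos.ne') (sqrt_pos.2 hpos).ne'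
  refine hquot.congr_deriv ?_
  have hsq := sq_sqrt hpos.le
  have hD := sqrt_pos.2 hpos
  field_simp
  rw [hsq, id]
  ring

theorem one_sub_sq_sqrt_mul_div_sqrt (hb : b ≠ 0) (v : ℝ) :
    1 - (√(a ^ 2 + b ^ 2) * v / √(a ^ 2 * v ^ 2 + b ^ 2)) ^ 2 =
      b ^ 2 * (1 - v ^ 2) / (a ^ 2 * v ^ 2 + b ^ 2) := by
  have hpos : 0 < a ^ 2 * v ^ 2 + b ^ 2 := by positivity
  rw [div_pow, mul_pow, sq_sqrt (by positivity), sq_sqrt hpos.le]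
  field_simp
  ring

theorem hasDerivAt_sqrt_mul_arcsin_mul_div_sqrt (hb : 0 < b) {v : ℝ} (hv : v ∈ Ioo (-1) 1) :
    HasDerivAt
      (fun v => √(a ^ 2 + b ^ 2) * arcsin (√(a ^ 2 + b ^ 2) * v / √(a ^ 2 * v ^ 2 + b ^ 2)))
      ((a ^ 2 + b ^ 2) * b / ((a ^ 2 * v ^ 2 + b ^ 2) * √(1 - v ^ 2))) v := by
  set s := √(a ^ 2 + b ^ 2) * v / √(a ^ 2 * v ^ 2 + b ^ 2)
  have hpos : 0 < a ^ 2 * v ^ 2 + b ^ 2 := by positivity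
  have hv2 : 0 < 1 - v ^ 2 := by nlinarith [hv.1, hv.2]
  have h1s : 1 - s ^ 2 = b ^ 2 * (1 - v ^ 2) / (a ^ 2 * v ^ 2 + b ^ 2) :=
    one_sub_sq_sqrt_mul_div_sqrt hb.ne' v
  have hs : s ^ 2 < 1 := by
    have h : 0 < 1 - s ^ 2 := h1s ▸ by positivity
    linarith
  have harc := hasDerivAt_arcsin (by nlinarith) (by nlinarith) |>.comp v
    (hasDerivAt_mul_div_sqrt_sq_mul_sq_add_sq (a := a) √(a ^ 2 + b ^ 2) hb.ne' v)
  refine (harc.const_mul √(a ^ 2 + b ^ 2)).congr_deriv ?_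
  rw [h1s, sqrt_div' _ hpos.le, sqrt_mul' _ hv2.le, sqrt_sq hb.le]
  have hD := sqrt_pos.2 hpos
  have hS := sqrt_pos.2 hv2
  field_simp
  exact sq_sqrt (by positivity)

end

theorem oblique_cylinder_mean_curvature_general (a b : ℝ) (hb : 0 < b) :
    ∫ v in (-1:ℝ)..1,
        (a ^ 2 + b ^ 2) * b / ((a ^ 2 * v ^ 2 + b ^ 2) * Real.sqrt (1 - v ^ 2)) =
      π * Real.sqrt (a ^ 2 + b ^ 2) := by
  set F := fun v =>
    √(a ^ 2 + b ^ 2) * arcsin (√(a ^ 2 + b ^ 2) * v / √(a ^ 2 * v ^ 2 + b ^ 2))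
  have hF : Continuous F := by
    have hD : ∀ v, √(a ^ 2 * v ^ 2 + b ^ 2) ≠ 0 := fun v => (sqrt_pos.2 (by positivity)).ne'
    fun_prop (disch := exact hD _)
  have hF' := fun v (hv : v ∈ Ioo (-1 : ℝ) 1) =>
    hasDerivAt_sqrt_mul_arcsin_mul_div_sqrt (a := a) hb hv
  have hint : IntervalIntegrable
      (fun v => (a ^ 2 + b ^ 2) * b / ((a ^ 2 * v ^ 2 + b ^ 2) * √(1 - v ^ 2))) volume (-1) 1 :=
    intervalIntegrable_deriv_of_nonneg hF.continuousOn (by simpa using hF') fun v _ => by positivity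
  rw [integral_eq_sub_of_hasDerivAt_of_le (by norm_num) hF.continuousOn hF' hint]
  have hc : √(a ^ 2 + b ^ 2) ≠ 0 := (sqrt_pos.2 (by positivity)).ne'
  simp only [F, mul_one, one_pow, mul_neg, even_two, Even.neg_pow, neg_div, div_self hc, arcsin_neg,
    arcsin_one, sub_neg_eq_add]
  ring

theorem oblique_cylinder_mean_curvature (a b : ℝ) (ha : 0 ≤ a) (hb : 0 < b) :
    ∫ v in (-1:ℝ)..1,
        (a ^ 2 + b ^ 2) * b / ((a ^ 2 * v ^ 2 + b ^ 2) * Real.sqrt (1 - v ^ 2)) =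
      π * Real.sqrt (a ^ 2 + b ^ 2) :=
  oblique_cylinder_mean_curvature_general a b hb
end

section
/- For a ≥ 0 and b > 0, ∫_{-1}^{1} (1 + a² + b² - 2av)·b / (((1-av)² + b²)·√(1-v²)) dv = (π/2)·(√(a² + (b-i)²) + √(a² + (b+i)²)), where i is the imaginary unit and the square root uses the principal branch; equivalently the right-hand side equals π·Re√(a² + (b+i)²). -/
open Real Complex MeasureTheory Set Filter
open scoped Topology

noncomputable section


lemma csqrt_sq (w : ℂ) : (w ^ ((1:ℂ)/2)) ^ 2 = w := by
  have h := Complex.cpow_nat_inv_pow w (two_ne_zero)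
  norm_num at h
  convert h using 2

lemma csqrt_re_nonneg (w : ℂ) : 0 ≤ (w ^ ((1:ℂ)/2)).re := by
  rcases eq_or_ne w 0 with rfl | hw
  · simp [Complex.zero_cpow (by norm_num : (1:ℂ)/2 ≠ 0)]
  rw [Complex.cpow_def_of_ne_zero hw, Complex.exp_re]
  have h1 : (Complex.log w * ((1:ℂ)/2)).im = w.arg / 2 := by
    simp [Complex.mul_im, Complex.log_im, Complex.log_re]
    ring
  rw [h1]
  have h2 := Complex.neg_pi_lt_arg w
  have h3 := Complex.arg_le_pi w
  have : Real.cos (w.arg / 2) ≥ 0 := by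
    apply Real.cos_nonneg_of_mem_Icc
    constructor <;> [linarith; linarith]
  positivity

lemma csqrt_eq {w v : ℂ} (hv : v ^ 2 = w) (hre : 0 < v.re) : w ^ ((1:ℂ)/2) = v := by
  have hsq := csqrt_sq w
  have h : (w ^ ((1:ℂ)/2) - v) * (w ^ ((1:ℂ)/2) + v) = 0 := by
    linear_combination hsq - hv
  rcases mul_eq_zero.mp h with h1 | h1
  · exact sub_eq_zero.mp h1
  · exfalso
    have h2 := csqrt_re_nonneg w
    have h3 : w ^ ((1:ℂ)/2) = -v := eq_neg_of_add_eq_zero_left h1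
    rw [h3, Complex.neg_re] at h2
    linarith

lemma csqrt_re_pos {w : ℂ} (him : w.im ≠ 0) : 0 < (w ^ ((1:ℂ)/2)).re := by
  have hsq := csqrt_sq w
  have h2 := csqrt_re_nonneg w
  rcases h2.lt_or_eq with h | h
  · exact h
  · exfalso
    apply him
    have : w.im = (  (w ^ ((1:ℂ)/2)) ^ 2).im := by rw [hsq]
    rw [this, sq, Complex.mul_im, ← h]
    ring

lemma csqrt_im_eq {w : ℂ} (him : w.im ≠ 0) :
    (w ^ ((1:ℂ)/2)).im = w.im / (2 * (w ^ ((1:ℂ)/2)).re) := by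
  have hsq := csqrt_sq w
  have hre := csqrt_re_pos him
  have : w.im = 2 * (w ^ ((1:ℂ)/2)).re * (w ^ ((1:ℂ)/2)).im := by
    conv_lhs => rw [← hsq]
    rw [sq, Complex.mul_im]
    ring
  rw [this]; field_simp

lemma core (z : ℂ) (hre : 0 < z.re) (him : z.im ≠ 0) :
    ∫ θ in (0:ℝ)..π, (Real.sin θ:ℂ)^2 / (z - (Real.cos θ:ℂ)) =
      π * (z - (z^2 - 1) ^ ((1:ℂ)/2)) := by
  have him2 : (z^2 - 1).im ≠ 0 := by
    have h : (z^2-1).im = 2 * z.re * z.im := by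
      rw [Complex.sub_im, sq, Complex.mul_im]; simp; ring
    rw [h]
    exact mul_ne_zero (mul_ne_zero two_ne_zero hre.ne') him
  set s : ℂ := (z^2 - 1) ^ ((1:ℂ)/2) with hs_def
  have hs2 : s^2 = z^2 - 1 := csqrt_sq _
  have hsre : 0 < s.re := csqrt_re_pos him2
  have hs0 : s ≠ 0 := fun h => by rw [h] at hsre; simp at hsre
  have him_eq : 2 * s.re * s.im = 2 * z.re * z.im := by
    have := congrArg Complex.im hs2
    rw [sq, sq, Complex.mul_im, Complex.sub_im, Complex.mul_im] at this
    simp at this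
    linarith
  have hzs : 0 < z.re * s.re + z.im * s.im := by
    have h1 : z.im * s.im * s.re = z.re * z.im^2 := by
      linear_combination (z.im/2) * him_eq
    nlinarith [mul_pos (mul_pos hre hsre) hsre, sq_nonneg z.im, h1, hsre]
  set α : ℂ := z + s with hα
  set β : ℂ := z - s with hβ
  have hαβ : α * β = 1 := by rw [hα, hβ]; linear_combination -hs2
  have hβ0 : β ≠ 0 := by
    intro h; rw [h, mul_zero] at hαβ; exact one_ne_zero hαβ.symm
  have hnormlt : Complex.normSq β < Complex.normSq α := by
    rw [hα, hβ]
    simp [Complex.normSq_apply]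
    nlinarith [hzs]
  have habslt : ‖β‖ < ‖α‖ := by
    rw [Complex.norm_def, Complex.norm_def]
    exact Real.sqrt_lt_sqrt (Complex.normSq_nonneg _) hnormlt
  have hprod : ‖α‖ * ‖β‖ = 1 := by
    rw [← norm_mul, hαβ, norm_one]
  have hβpos : 0 < ‖β‖ := by
    simpa using norm_pos_iff.mpr hβ0
  have habsβ : ‖β‖ < 1 := by nlinarith
  have habsα : 1 < ‖α‖ := by nlinarith
  have hα0 : α ≠ 0 := by
    intro h; rw [h, zero_mul] at hαβ; exact one_ne_zero hαβ.symm
  -- the antiderivative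
  set A : ℝ → ℂ := fun t => z * (t:ℂ) + (Real.sin t : ℂ) -
      (z^2 - 1) * ((t : ℂ)/s + (I/s) * (Complex.log (1 - Complex.exp ((t:ℂ) * I)/α)
        - Complex.log (1 - β * Complex.exp (-((t:ℂ) * I))))) with hA
  have key : ∀ θ : ℝ, HasDerivAt A ((Real.sin θ:ℂ)^2 / (z - (Real.cos θ:ℂ))) θ := by
    intro θ
    have hu : ‖Complex.exp ((θ:ℂ)*I)‖ = 1 := Complex.norm_exp_ofReal_mul_I θ
    have hu0 : Complex.exp ((θ:ℂ)*I) ≠ 0 := Complex.exp_ne_zero _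
    have hu'abs : ‖Complex.exp (-((θ:ℂ)*I))‖ = 1 := by
      rw [Complex.exp_neg, norm_inv, hu]; norm_num
    have h1re : 0 < (1 - Complex.exp ((θ:ℂ)*I)/α).re := by
      have hq : ‖Complex.exp ((θ:ℂ)*I)/α‖ < 1 := by
        rw [norm_div, hu]
        rw [div_lt_one (by linarith : (0:ℝ) < ‖α‖)]; exact habsα
      have := Complex.re_le_norm (Complex.exp ((θ:ℂ)*I)/α)
      simp only [Complex.sub_re, Complex.one_re]
      linarith
    have h2re : 0 < (1 - β * Complex.exp (-((θ:ℂ)*I))).re := by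
      have hq : ‖β * Complex.exp (-((θ:ℂ)*I))‖ < 1 := by
        rw [norm_mul, hu'abs, mul_one]; exact habsβ
      have := Complex.re_le_norm (β * Complex.exp (-((θ:ℂ)*I)))
      simp only [Complex.sub_re, Complex.one_re]
      linarith
    have h1 : (1 - Complex.exp ((θ:ℂ)*I)/α) ∈ Complex.slitPlane := Or.inl h1re
    have h2 : (1 - β * Complex.exp (-((θ:ℂ)*I))) ∈ Complex.slitPlane := Or.inl h2re
    have hd1 : (1 - Complex.exp ((θ:ℂ)*I)/α) ≠ 0 := Complex.slitPlane_ne_zero h1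
    have hd2 : (1 - β * Complex.exp (-((θ:ℂ)*I))) ≠ 0 := Complex.slitPlane_ne_zero h2
    have d0 : HasDerivAt (fun t:ℝ => ((t:ℝ):ℂ)) 1 θ := (hasDerivAt_id θ).ofReal_comp
    have dzθ : HasDerivAt (fun t:ℝ => z * (t:ℂ)) z θ := by simpa using d0.const_mul z
    have dsin : HasDerivAt (fun t:ℝ => ((Real.sin t : ℝ):ℂ)) ((Real.cos θ:ℝ):ℂ) θ :=
      (Real.hasDerivAt_sin θ).ofReal_comp
    have dθs : HasDerivAt (fun t:ℝ => ((t:ℂ))/s) (1/s) θ := by simpa using d0.div_const s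
    have dexp : HasDerivAt (fun t:ℝ => Complex.exp ((t:ℂ)*I)) (Complex.exp ((θ:ℂ)*I) * I) θ := by
      simpa using (d0.mul_const I).cexp
    have dexp' : HasDerivAt (fun t:ℝ => Complex.exp (-((t:ℂ)*I)))
        (Complex.exp (-((θ:ℂ)*I)) * (-I)) θ := by
      simpa using ((d0.mul_const I).neg).cexp
    have dlog1 : HasDerivAt (fun t:ℝ => Complex.log (1 - Complex.exp ((t:ℂ)*I)/α))
        ((-(Complex.exp ((θ:ℂ)*I) * I / α)) / (1 - Complex.exp ((θ:ℂ)*I)/α)) θ := by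
      have dinner : HasDerivAt (fun t:ℝ => 1 - Complex.exp ((t:ℂ)*I)/α)
          (-(Complex.exp ((θ:ℂ)*I) * I / α)) θ := by
        simpa using ((dexp.div_const α).const_sub 1)
      exact dinner.clog_real h1
    have dlog2 : HasDerivAt (fun t:ℝ => Complex.log (1 - β * Complex.exp (-((t:ℂ)*I))))
        ((-(β * (Complex.exp (-((θ:ℂ)*I)) * (-I)))) / (1 - β * Complex.exp (-((θ:ℂ)*I)))) θ := by
      have dinner : HasDerivAt (fun t:ℝ => 1 - β * Complex.exp (-((t:ℂ)*I)))
          (-(β * (Complex.exp (-((θ:ℂ)*I)) * (-I)))) θ := by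
        simpa using ((dexp'.const_mul β).const_sub 1)
      exact dinner.clog_real h2
    have dA := (dzθ.add dsin).sub
      ((dθs.add ((dlog1.sub dlog2).const_mul (I/s))).const_mul (z^2-1))
    rw [hA]
    refine dA.congr_deriv ?_
    symm
    -- now the algebra
    set c : ℂ := (Real.cos θ:ℂ) with hc
    set sn : ℂ := (Real.sin θ:ℂ) with hsn
    set u : ℂ := Complex.exp ((θ:ℂ)*I) with hu_def
    set u' : ℂ := Complex.exp (-((θ:ℂ)*I)) with hu'_def
    have huu' : u * u' = 1 := by rw [hu_def, hu'_def, ← Complex.exp_add]; simp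
    have hcs : sn^2 + c^2 = 1 := by
      rw [hc, hsn]; push_cast [← Complex.ofReal_pow]
      exact_mod_cast Real.sin_sq_add_cos_sq θ
    have he : u = c + sn * I := by
      rw [hu_def, Complex.exp_mul_I, hc, hsn, Complex.ofReal_cos, Complex.ofReal_sin]
    have huα : u - α ≠ 0 := by
      intro h
      rw [sub_eq_zero] at h
      rw [h] at hu
      linarith [hu ▸ habsα]
    have huβ : u - β ≠ 0 := by
      intro h
      rw [sub_eq_zero] at h
      rw [h] at hu
      linarith [hu ▸ habsβ]
    have hzc : z - c ≠ 0 := by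
      intro h
      apply him
      have := congrArg Complex.im h
      simpa [hc] using this
    have m1 : (u-α)*(u-β) = u^2 - 2*z*u + 1 := by rw [hα, hβ]; linear_combination -hs2
    have m2 : (u-α)*(u-β) - u*(u-β) + β*(u-α) = -(2*u*s) := by rw [hα, hβ]; ring
    have m3 : u^2 + 1 = 2*c*u := by
      rw [he]; linear_combination (sn^2) * Complex.I_sq - hcs
    have hden : u^2 - 2*z*u + 1 ≠ 0 := m1 ▸ mul_ne_zero huα huβ
    have step1 : (-(u * I / α)) / (1 - u/α) = u*I/(u-α) := by
      rw [div_eq_div_iff hd1 huα]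
      field_simp
      ring
    have step2 : (-(β * (u' * (-I)))) / (1 - β * u') = β*I/(u-β) := by
      rw [div_eq_div_iff hd2 huβ]
      linear_combination (β*I) * huu'
    have step3 : 1/s + I/s * (u*I/(u-α) - β*I/(u-β)) = 1/(z-c) := by
      have e1 : 1/s + I/s * (u*I/(u-α) - β*I/(u-β)) =
          ((u-α)*(u-β) + I*(u*I*(u-β) - β*I*(u-α)))/(s*((u-α)*(u-β))) := by
        field_simp
      have e2 : (u-α)*(u-β) + I*(u*I*(u-β) - β*I*(u-α)) = -(2*u*s) := by
        rw [← m2]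
        linear_combination (u*(u-β) - β*(u-α)) * Complex.I_sq
      have e3 : 1/(z-c) = -(2*u)/(u^2 - 2*z*u + 1) := by
        rw [div_eq_div_iff hzc hden]
        linear_combination m3
      rw [e1, e2, e3, m1]
      rw [div_eq_div_iff (mul_ne_zero hs0 (m1 ▸ hden)) hden]
      ring
    rw [step1, step2, step3]
    rw [div_eq_iff hzc]
    field_simp [hzc]
    linear_combination hcs
  -- continuity of the integrand
  have hcont : Continuous (fun θ:ℝ => (Real.sin θ:ℂ)^2 / (z - (Real.cos θ:ℂ))) := by
    apply Continuous.div
    · continuity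
    · continuity
    · intro θ
      intro h
      apply him
      have := congrArg Complex.im h
      simpa using this
  have hFTC := intervalIntegral.integral_eq_sub_of_hasDerivAt
    (fun θ _ => key θ) (hcont.intervalIntegrable 0 π)
  rw [hFTC]
  -- evaluate endpoints
  have hinv : (1:ℂ)/α = β := by
    rw [eq_comm, eq_div_iff hα0, mul_comm]; exact hαβ
  have hA0 : A 0 = 0 := by
    rw [hA]
    simp only [Complex.ofReal_zero, mul_zero, zero_mul, neg_zero, Complex.exp_zero]
    rw [show (1:ℂ) - 1/α = 1 - β by rw [hinv]]
    simp
  have hAπ : A π = π * (z - s) := by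
    simp only [hA]
    have e1 : Complex.exp ((π:ℂ) * I) = -1 := Complex.exp_pi_mul_I
    have e2 : Complex.exp (-((π:ℂ) * I)) = -1 := by
      rw [Complex.exp_neg, e1]; norm_num
    rw [e1, e2]
    have e3 : (1:ℂ) - (-1)/α = 1 + β := by rw [neg_div, sub_neg_eq_add, hinv]
    have e4 : (1:ℂ) - β * (-1) = 1 + β := by ring
    rw [e3, e4, sub_self, mul_zero, add_zero]
    rw [Real.sin_pi, Complex.ofReal_zero]
    have hthis : (z^2 - 1) * ((π:ℂ)/s) = π * s := by
      rw [← hs2, sq, div_eq_mul_inv]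
      have h9 : s * s * ((π:ℂ) * s⁻¹) = (π:ℂ) * s * (s * s⁻¹) := by ring
      rw [h9, mul_inv_cancel₀ hs0, mul_one]
    rw [hthis]
    ring
  rw [hA0, hAπ, sub_zero, hβ]



lemma subst_cos (h : ℝ → ℝ) (hh : Continuous h) :
    (∫ v in (-1:ℝ)..1, h v / Real.sqrt (1 - v^2)) = ∫ θ in (0:ℝ)..π, h (Real.cos θ) := by
  obtain ⟨M, hM⟩ : ∃ M, ∀ v ∈ Icc (-1:ℝ) 1, |h v| ≤ M := by
    obtain ⟨M, hM⟩ := (isCompact_Icc (a := (-1:ℝ)) (b := 1)).exists_bound_of_continuousOn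
      (f := h) hh.continuousOn
    exact ⟨M, fun v hv => by simpa [Real.norm_eq_abs] using hM v hv⟩
  have hM0 : 0 ≤ M := le_trans (abs_nonneg _) (hM 0 (by norm_num))
  set g : ℝ → ℝ := fun v => h v / Real.sqrt (1 - v^2) with hg
  -- continuity of g on Ioo (-1) 1 and subsets
  have hsqrt_pos : ∀ v ∈ Ioo (-1:ℝ) 1, 0 < Real.sqrt (1 - v^2) := by
    intro v hv
    apply Real.sqrt_pos.mpr
    nlinarith [hv.1, hv.2]
  have hgcont : ∀ s ⊆ Ioo (-1:ℝ) 1, ContinuousOn g s := by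
    intro s hs
    apply ContinuousOn.div (hh.continuousOn)
    · exact ((continuous_const.sub (continuous_pow 2)).sqrt).continuousOn
    · intro v hv; exact (hsqrt_pos v (hs hv)).ne'
  -- integrability of g on Ioo (-1) 1
  have hbase : IntegrableOn (fun v:ℝ => 1 / Real.sqrt (1 - v^2)) (Ioo (-1:ℝ) 1) := by
    have h1 : IntegrableOn (fun v:ℝ => 1 / Real.sqrt (1 - v^2)) (Ioc (-1:ℝ) 1) := by
      apply intervalIntegral.integrableOn_deriv_of_nonneg
        (Real.continuous_arcsin.continuousOn)
      · intro x hx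
        exact Real.hasDerivAt_arcsin (ne_of_gt hx.1) (ne_of_lt hx.2)
      · intro x hx
        positivity
    exact h1.mono_set Ioo_subset_Ioc_self
  have hgint : IntegrableOn g (Ioo (-1:ℝ) 1) := by
    apply Integrable.mono' (hbase.const_mul M)
    · exact (hgcont _ (subset_refl _)).aestronglyMeasurable measurableSet_Ioo
    · rw [ae_restrict_iff' measurableSet_Ioo]
      apply ae_of_all
      intro v hv
      have h1 := hsqrt_pos v hv
      rw [hg]
      simp only [Real.norm_eq_abs]
      rw [abs_div, abs_of_pos h1, div_le_iff₀ h1]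
      have := hM v (Ioo_subset_Icc_self hv)
      calc |h v| ≤ M := this
        _ = M * (1/Real.sqrt (1-v^2)) * Real.sqrt (1-v^2) := by field_simp
  -- substitution for truncated intervals
  have S1 : ∀ δ : ℝ, 0 < δ → δ < π/2 →
      (∫ v in (-(Real.cos δ))..(Real.cos δ), g v) = ∫ θ in δ..(π - δ), h (Real.cos θ) := by
    intro δ hδ0 hδ2
    have hle : δ ≤ π - δ := by linarith
    have huIcc : Set.uIcc δ (π - δ) = Icc δ (π - δ) := uIcc_of_le hle
    have hmem : ∀ θ ∈ Icc δ (π - δ), Real.cos θ ∈ Icc (-(Real.cos δ)) (Real.cos δ) := by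
      intro θ hθ
      constructor
      · have := Real.cos_le_cos_of_nonneg_of_le_pi (by linarith [hθ.1] : (0:ℝ) ≤ θ)
          (by linarith : π - δ ≤ π) hθ.2
        rw [Real.cos_pi_sub] at this
        linarith
      · exact Real.cos_le_cos_of_nonneg_of_le_pi hδ0.le (by linarith [hθ.2] : θ ≤ π) hθ.1
    have hcosδlt : Real.cos δ < 1 := by
      have := Real.cos_lt_cos_of_nonneg_of_le_pi (le_refl 0) (by linarith [Real.pi_pos]) hδ0
      simpa using this
    have hsub : Icc (-(Real.cos δ)) (Real.cos δ) ⊆ Ioo (-1:ℝ) 1 := by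
      intro x hx
      constructor <;> [linarith [hx.1]; linarith [hx.2]]
    have key := intervalIntegral.integral_comp_smul_deriv'' (f := Real.cos)
      (f' := fun θ => -Real.sin θ) (g := g) (a := δ) (b := π - δ)
      (Real.continuous_cos.continuousOn)
      (fun x _ => (Real.hasDerivAt_cos x).hasDerivWithinAt)
      ((Real.continuous_sin.neg).continuousOn)
      (by
        apply (hgcont _ (Subset.trans ?_ hsub))
        rw [huIcc]
        exact image_subset_iff.mpr hmem)
    rw [Real.cos_pi_sub] at key
    have key' : (∫ x in δ..(π - δ), (-Real.sin x) • g (Real.cos x)) =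
        ∫ u in (Real.cos δ)..(-Real.cos δ), g u := by
      rw [← key]
      apply intervalIntegral.integral_congr
      intro x _
      simp [Function.comp]
    have congr1 : (∫ θ in δ..(π - δ), h (Real.cos θ)) =
        -∫ x in δ..(π - δ), (-Real.sin x) • g (Real.cos x) := by
      rw [← intervalIntegral.integral_neg]
      apply intervalIntegral.integral_congr
      intro θ hθ
      rw [huIcc] at hθ
      have hsinpos : 0 < Real.sin θ := Real.sin_pos_of_pos_of_lt_pi
        (by linarith [hθ.1]) (by linarith [hθ.2])
      have hsq : Real.sqrt (1 - Real.cos θ^2) = Real.sin θ := by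
        rw [← Real.sin_sq θ, Real.sqrt_sq hsinpos.le]
      simp only [smul_eq_mul, neg_neg, neg_mul, hg]
      rw [hsq]
      field_simp
    rw [congr1, key', intervalIntegral.integral_symm]
  -- now the limiting argument
  set T : ℝ := ∫ θ in (0:ℝ)..π, h (Real.cos θ) with hT
  set δ : ℕ → ℝ := fun n => π/(2*(n+2)) with hδ
  have hδpos : ∀ n, 0 < δ n := by
    intro n; rw [hδ]; positivity
  have hδlt : ∀ n, δ n < π/2 := by
    intro n
    rw [hδ, div_lt_div_iff₀ (by positivity) (by norm_num)]
    have : (2:ℝ) < 2*(n+2) := by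
      have : (0:ℝ) ≤ n := Nat.cast_nonneg n
      nlinarith
    nlinarith [Real.pi_pos]
  have hδanti : ∀ m n, m ≤ n → δ n ≤ δ m := by
    intro m n hmn
    rw [hδ]
    apply div_le_div_of_nonneg_left Real.pi_pos.le (by positivity)
    have : (m:ℝ) ≤ n := Nat.cast_le.mpr hmn
    linarith
  have hδtend : Tendsto δ atTop (𝓝 0) := by
    rw [hδ]
    apply Filter.Tendsto.div_atTop tendsto_const_nhds
    apply Filter.Tendsto.const_mul_atTop (by norm_num : (0:ℝ) < 2)
    exact tendsto_atTop_add_const_right atTop 2 tendsto_natCast_atTop_atTop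
  -- θ-side limit
  have hbound2 : ∀ θ : ℝ, |h (Real.cos θ)| ≤ M := fun θ =>
    hM _ ⟨(Real.neg_one_le_cos θ), (Real.cos_le_one θ)⟩
  have hint : ∀ u v : ℝ, IntervalIntegrable (fun θ => h (Real.cos θ)) volume u v :=
    fun u v => (hh.comp Real.continuous_cos).intervalIntegrable u v
  have htail1 : Tendsto (fun n => ∫ θ in (0:ℝ)..(δ n), h (Real.cos θ)) atTop (𝓝 0) := by
    apply squeeze_zero_norm (fun n => ?_) (by simpa using hδtend.const_mul M)
    have := intervalIntegral.norm_integral_le_of_norm_le_const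
      (f := fun θ => h (Real.cos θ)) (a := 0) (b := δ n) (C := M)
      (fun x _ => by simpa using hbound2 x)
    calc ‖∫ θ in (0:ℝ)..(δ n), h (Real.cos θ)‖ ≤ M * |δ n - 0| := this
      _ = M * δ n := by rw [sub_zero, abs_of_pos (hδpos n)]
  have htail2 : Tendsto (fun n => ∫ θ in (π - δ n)..π, h (Real.cos θ)) atTop (𝓝 0) := by
    apply squeeze_zero_norm (fun n => ?_) (by simpa using hδtend.const_mul M)
    have := intervalIntegral.norm_integral_le_of_norm_le_const
      (f := fun θ => h (Real.cos θ)) (a := π - δ n) (b := π) (C := M)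
      (fun x _ => by simpa using hbound2 x)
    calc ‖∫ θ in (π - δ n)..π, h (Real.cos θ)‖ ≤ M * |π - (π - δ n)| := this
      _ = M * δ n := by rw [show π - (π - δ n) = δ n by ring, abs_of_pos (hδpos n)]
  have hsplit : ∀ n, (∫ θ in (δ n)..(π - δ n), h (Real.cos θ)) =
      T - (∫ θ in (0:ℝ)..(δ n), h (Real.cos θ)) - (∫ θ in (π - δ n)..π, h (Real.cos θ)) := by
    intro n
    have e1 := intervalIntegral.integral_add_adjacent_intervals (a := (0:ℝ)) (b := δ n)
      (c := π - δ n) (hint _ _) (hint _ _)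
    have e2 := intervalIntegral.integral_add_adjacent_intervals (a := (0:ℝ)) (b := π - δ n)
      (c := π) (hint _ _) (hint _ _)
    rw [hT]
    linarith [e1, e2]
  have hΨtend : Tendsto (fun n => ∫ θ in (δ n)..(π - δ n), h (Real.cos θ)) atTop (𝓝 T) := by
    simp_rw [hsplit]
    have := (tendsto_const_nhds (x := T) (f := atTop (α := ℕ))).sub htail1 |>.sub htail2
    simpa using this
  -- v-side limit
  have hΦtend : Tendsto (fun n => ∫ v in Ioo (-(Real.cos (δ n))) (Real.cos (δ n)), g v) atTop
      (𝓝 (∫ v in Ioo (-1:ℝ) 1, g v)) := by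
    have hmono : Monotone (fun n => Ioo (-(Real.cos (δ n))) (Real.cos (δ n))) := by
      intro m n hmn
      have h1 : Real.cos (δ m) ≤ Real.cos (δ n) :=
        Real.cos_le_cos_of_nonneg_of_le_pi (hδpos n).le
          (by linarith [hδlt m, Real.pi_pos]) (hδanti m n hmn)
      exact Ioo_subset_Ioo (by linarith) h1
    have hunion : (⋃ n, Ioo (-(Real.cos (δ n))) (Real.cos (δ n))) = Ioo (-1:ℝ) 1 := by
      apply Subset.antisymm
      · apply iUnion_subset
        intro n
        have h1 : Real.cos (δ n) < 1 := by
          have := Real.cos_lt_cos_of_nonneg_of_le_pi (le_refl 0)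
            (by linarith [hδlt n, Real.pi_pos]) (hδpos n)
          simpa using this
        exact Ioo_subset_Ioo (by linarith) h1.le
      · intro x hx
        have hcostend : Tendsto (fun n => Real.cos (δ n)) atTop (𝓝 1) := by
          have := (Real.continuous_cos.tendsto 0).comp hδtend
          simpa using (show Tendsto (fun n => Real.cos (δ n)) atTop (𝓝 (Real.cos 0)) from this)
        have hgt : ∀ᶠ n in atTop, |x| < Real.cos (δ n) :=
          hcostend.eventually (eventually_gt_nhds (abs_lt.mpr ⟨hx.1, hx.2⟩))
        obtain ⟨n, hn⟩ := hgt.exists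
        rw [abs_lt] at hn
        exact mem_iUnion.mpr ⟨n, hn.1, hn.2⟩
    have := tendsto_setIntegral_of_monotone (fun n => measurableSet_Ioo) hmono
      (hunion ▸ hgint)
    rwa [hunion] at this
  -- identify the terms
  have hterm : ∀ n, (∫ v in Ioo (-(Real.cos (δ n))) (Real.cos (δ n)), g v) =
      ∫ θ in (δ n)..(π - δ n), h (Real.cos θ) := by
    intro n
    rw [← S1 (δ n) (hδpos n) (hδlt n)]
    have hcos0 : 0 < Real.cos (δ n) := Real.cos_pos_of_mem_Ioo
      ⟨by linarith [hδpos n, Real.pi_pos], hδlt n⟩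
    rw [intervalIntegral.integral_of_le (by linarith : -(Real.cos (δ n)) ≤ Real.cos (δ n)),
      integral_Ioc_eq_integral_Ioo]
  have hfinal : (∫ v in Ioo (-1:ℝ) 1, g v) = T := by
    apply tendsto_nhds_unique _ hΨtend
    have := hΦtend
    simp_rw [hterm] at this
    exact this
  rw [intervalIntegral.integral_of_le (by norm_num : (-1:ℝ) ≤ 1), integral_Ioc_eq_integral_Ioo]
  exact hfinal


lemma pointwise_id (a b cθ sθ : ℝ) (ha : 0 < a) (hb : 0 < b)
    (hcs : sθ^2 + cθ^2 = 1) :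
    (((1 + a^2 + b^2 - 2*a*cθ) * b / ((1 - a*cθ)^2 + b^2) : ℝ) : ℂ) =
      b + (Complex.I*a/2) * ((sθ:ℂ)^2/((((1/a:ℝ):ℂ) + ((b/a:ℝ):ℂ)*Complex.I) - (cθ:ℂ))
        - (sθ:ℂ)^2/((((1/a:ℝ):ℂ) - ((b/a:ℝ):ℂ)*Complex.I) - (cθ:ℂ))) := by
  have hD : ((1:ℝ) - a*cθ)^2 + b^2 ≠ 0 := by positivity
  have ha' : (a:ℂ) ≠ 0 := Complex.ofReal_ne_zero.mpr ha.ne'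
  have hb' : (b:ℂ) ≠ 0 := Complex.ofReal_ne_zero.mpr hb.ne'
  have hw1 : ((1:ℂ) - (a:ℂ)*(cθ:ℂ)) + (b:ℂ)*Complex.I ≠ 0 := by
    intro h
    have := congrArg Complex.im h
    simp at this
    exact hb.ne' this
  have hw2 : ((1:ℂ) - (a:ℂ)*(cθ:ℂ)) - (b:ℂ)*Complex.I ≠ 0 := by
    intro h
    have := congrArg Complex.im h
    simp at this
    exact hb.ne' this
  have hDc : ((1:ℂ) - (a:ℂ)*(cθ:ℂ))^2 + (b:ℂ)^2 ≠ 0 := by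
    intro h
    apply hD
    have : ((((1:ℝ) - a*cθ)^2 + b^2 : ℝ) : ℂ) = 0 := by push_cast; rw [← h]
    exact_mod_cast this
  have hcsC : ((sθ:ℂ))^2 + ((cθ:ℂ))^2 = 1 := by exact_mod_cast congrArg (Complex.ofReal) hcs
  have e1 : (((1/a:ℝ):ℂ) + ((b/a:ℝ):ℂ)*Complex.I) - (cθ:ℂ)
      = (((1:ℂ) - (a:ℂ)*(cθ:ℂ)) + (b:ℂ)*Complex.I)/(a:ℂ) := by
    push_cast; field_simp; ring
  have e2 : (((1/a:ℝ):ℂ) - ((b/a:ℝ):ℂ)*Complex.I) - (cθ:ℂ)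
      = (((1:ℂ) - (a:ℂ)*(cθ:ℂ)) - (b:ℂ)*Complex.I)/(a:ℂ) := by
    push_cast; field_simp; ring
  rw [e1, e2, div_div_eq_mul_div, div_div_eq_mul_div, div_sub_div _ _ hw1 hw2]
  have m1 : (((1:ℂ) - (a:ℂ)*(cθ:ℂ)) + (b:ℂ)*Complex.I) * (((1:ℂ) - (a:ℂ)*(cθ:ℂ)) - (b:ℂ)*Complex.I)
      = ((1:ℂ) - (a:ℂ)*(cθ:ℂ))^2 + (b:ℂ)^2 := by
    linear_combination -(((b:ℂ))^2) * Complex.I_sq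
  have m2 : (sθ:ℂ)^2*(a:ℂ) * (((1:ℂ) - (a:ℂ)*(cθ:ℂ)) - (b:ℂ)*Complex.I)
      - (((1:ℂ) - (a:ℂ)*(cθ:ℂ)) + (b:ℂ)*Complex.I) * ((sθ:ℂ)^2*(a:ℂ))
      = -2*(a:ℂ)*(b:ℂ)*(sθ:ℂ)^2*Complex.I := by ring
  rw [m1, m2]
  push_cast
  field_simp
  linear_combination ((a:ℂ)^2*(sθ:ℂ)^2) * Complex.I_sq - (a:ℂ)^2 * hcsC

theorem oblique_cone_mean_curvature (a b : ℝ) (ha : 0 ≤ a) (hb : 0 < b) :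
    ((∫ v in (-1:ℝ)..1,
        (1 + a ^ 2 + b ^ 2 - 2 * a * v) * b /
          (((1 - a * v) ^ 2 + b ^ 2) * Real.sqrt (1 - v ^ 2)) : ℝ) : ℂ) =
      (π / 2 : ℂ) *
        (((a : ℂ) ^ 2 + ((b : ℂ) - Complex.I) ^ 2) ^ ((1 : ℂ) / 2) +
         ((a : ℂ) ^ 2 + ((b : ℂ) + Complex.I) ^ 2) ^ ((1 : ℂ) / 2)) := by
  set h : ℝ → ℝ := fun v => (1 + a ^ 2 + b ^ 2 - 2 * a * v) * b / ((1 - a * v) ^ 2 + b ^ 2)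
    with hh_def
  have hh : Continuous h := by
    apply Continuous.div (by continuity) (by continuity)
    intro v
    positivity
  have hsubst : (∫ v in (-1:ℝ)..1,
      (1 + a ^ 2 + b ^ 2 - 2 * a * v) * b /
        (((1 - a * v) ^ 2 + b ^ 2) * Real.sqrt (1 - v ^ 2)))
      = ∫ θ in (0:ℝ)..π, h (Real.cos θ) := by
    rw [← subst_cos h hh]
    apply intervalIntegral.integral_congr
    intro v _
    rw [hh_def]
    simp only [← div_div]
  rw [hsubst]
  rcases ha.eq_or_lt with rfl | ha'
  · -- a = 0
    have heval : ∀ θ : ℝ, h (Real.cos θ) = b := by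
      intro θ
      rw [hh_def]
      have hd : (1:ℝ) + b^2 ≠ 0 := by positivity
      simp only
      norm_num
      field_simp
    have : (∫ θ in (0:ℝ)..π, h (Real.cos θ)) = π * b := by
      rw [intervalIntegral.integral_congr (g := fun _ => b) (fun θ _ => heval θ)]
      rw [intervalIntegral.integral_const, smul_eq_mul, sub_zero]
    rw [this]
    have hW1 : (((0:ℝ):ℂ)^2 + ((b:ℂ) - Complex.I)^2) ^ ((1:ℂ)/2) = (b:ℂ) - Complex.I := by
      rw [show ((0:ℝ):ℂ)^2 + ((b:ℂ) - Complex.I)^2 = ((b:ℂ) - Complex.I)^2 by push_cast; ring]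
      exact csqrt_eq rfl (by simpa using hb)
    have hW2 : (((0:ℝ):ℂ)^2 + ((b:ℂ) + Complex.I)^2) ^ ((1:ℂ)/2) = (b:ℂ) + Complex.I := by
      rw [show ((0:ℝ):ℂ)^2 + ((b:ℂ) + Complex.I)^2 = ((b:ℂ) + Complex.I)^2 by push_cast; ring]
      exact csqrt_eq rfl (by simpa using hb)
    rw [hW1, hW2]
    push_cast
    ring
  · -- a > 0
    have haC : (a:ℂ) ≠ 0 := Complex.ofReal_ne_zero.mpr ha'.ne'
    set z₁ : ℂ := ((1/a:ℝ):ℂ) + ((b/a:ℝ):ℂ)*Complex.I with hz₁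
    set z₂ : ℂ := ((1/a:ℝ):ℂ) - ((b/a:ℝ):ℂ)*Complex.I with hz₂
    have hz₁re : z₁.re = 1/a := by simp [hz₁]
    have hz₁im : z₁.im = b/a := by simp [hz₁]
    have hz₂re : z₂.re = 1/a := by simp [hz₂]
    have hz₂im : z₂.im = -(b/a) := by simp [hz₂]
    have hba : 0 < b/a := div_pos hb ha'
    have hcore₁ := core z₁ (by rw [hz₁re]; positivity) (by rw [hz₁im]; exact hba.ne')
    have hcore₂ := core z₂ (by rw [hz₂re]; positivity) (by rw [hz₂im]; exact (neg_neg_iff_pos.mpr hba).ne)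
    have hznec : ∀ (z : ℂ), z.im ≠ 0 → ∀ θ : ℝ, z - ((Real.cos θ:ℝ):ℂ) ≠ 0 := by
      intro z hzim θ hzero
      apply hzim
      have := congrArg Complex.im hzero
      simpa using this
    have hnum : Continuous (fun θ:ℝ => ((Real.sin θ:ℝ):ℂ)^2) :=
      (Complex.continuous_ofReal.comp Real.continuous_sin).pow 2
    have hcont₁ : Continuous (fun θ:ℝ => ((Real.sin θ:ℝ):ℂ)^2/(z₁ - ((Real.cos θ:ℝ):ℂ))) := by
      apply Continuous.div hnum
        (continuous_const.sub (Complex.continuous_ofReal.comp Real.continuous_cos))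
      exact hznec z₁ (by rw [hz₁im]; exact hba.ne')
    have hcont₂ : Continuous (fun θ:ℝ => ((Real.sin θ:ℝ):ℂ)^2/(z₂ - ((Real.cos θ:ℝ):ℂ))) := by
      apply Continuous.div hnum
        (continuous_const.sub (Complex.continuous_ofReal.comp Real.continuous_cos))
      exact hznec z₂ (by rw [hz₂im]; exact (neg_neg_iff_pos.mpr hba).ne)
    rw [← intervalIntegral.integral_ofReal]
    have hptwise : Set.EqOn (fun θ : ℝ => ((h (Real.cos θ) : ℝ):ℂ))
        (fun θ : ℝ => (b:ℂ) + (Complex.I*a/2) * (((Real.sin θ:ℝ):ℂ)^2/(z₁ - ((Real.cos θ:ℝ):ℂ))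
          - ((Real.sin θ:ℝ):ℂ)^2/(z₂ - ((Real.cos θ:ℝ):ℂ)))) (Set.uIcc (0:ℝ) π) := by
      intro θ _
      simp only [hh_def, hz₁, hz₂]
      exact pointwise_id a b (Real.cos θ) (Real.sin θ) ha' hb (Real.sin_sq_add_cos_sq θ)
    rw [intervalIntegral.integral_congr hptwise]
    rw [intervalIntegral.integral_add (intervalIntegrable_const)
      (g := fun θ:ℝ => (Complex.I*(a:ℂ)/2) * (((Real.sin θ:ℝ):ℂ)^2/(z₁ - ((Real.cos θ:ℝ):ℂ)) - ((Real.sin θ:ℝ):ℂ)^2/(z₂ - ((Real.cos θ:ℝ):ℂ))))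
      ((continuous_const.mul (hcont₁.sub hcont₂)).intervalIntegrable _ _)]
    rw [intervalIntegral.integral_const_mul]
    rw [intervalIntegral.integral_sub (hcont₁.intervalIntegrable _ _)
      (hcont₂.intervalIntegrable _ _)]
    rw [hcore₁, hcore₂]
    rw [intervalIntegral.integral_const, sub_zero]
    -- identify the square roots
    set s₁ : ℂ := (z₁^2 - 1) ^ ((1:ℂ)/2) with hs₁
    set s₂ : ℂ := (z₂^2 - 1) ^ ((1:ℂ)/2) with hs₂
    have haz₁ : (a:ℂ) * z₁ = 1 + (b:ℂ)*Complex.I := by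
      rw [hz₁]; push_cast; field_simp
    have haz₂ : (a:ℂ) * z₂ = 1 - (b:ℂ)*Complex.I := by
      rw [hz₂]; push_cast; field_simp
    have him₁ : (z₁^2 - 1).im = 2*(1/a)*(b/a) := by
      rw [sq, Complex.sub_im, Complex.mul_im, hz₁re, hz₁im]
      simp
      ring
    have him₂ : (z₂^2 - 1).im = -(2*(1/a)*(b/a)) := by
      rw [sq, Complex.sub_im, Complex.mul_im, hz₂re, hz₂im]
      simp
      ring
    have him₁' : (z₁^2 - 1).im ≠ 0 := by rw [him₁]; positivity
    have him₂' : (z₂^2 - 1).im ≠ 0 := by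
      rw [him₂]
      simp only [ne_eq, neg_eq_zero]
      positivity
    have hs₁im : 0 < s₁.im := by
      rw [hs₁, csqrt_im_eq him₁', him₁]
      have := csqrt_re_pos him₁'
      positivity
    have hs₂im : s₂.im < 0 := by
      rw [hs₂, csqrt_im_eq him₂', him₂]
      have h9 := csqrt_re_pos him₂'
      apply div_neg_of_neg_of_pos
      · have : 0 < 2*(1/a)*(b/a) := by positivity
        linarith
      · positivity
    have hs₁sq : s₁^2 = z₁^2 - 1 := csqrt_sq _
    have hs₂sq : s₂^2 = z₂^2 - 1 := csqrt_sq _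
    have hW1 : ((a:ℂ)^2 + ((b:ℂ) - Complex.I)^2) ^ ((1:ℂ)/2) = -(Complex.I*(a:ℂ)*s₁) := by
      apply csqrt_eq
      · linear_combination (Complex.I^2*(a:ℂ)^2) * hs₁sq
          + (Complex.I^2*((a:ℂ)*z₁ + (1 + (b:ℂ)*Complex.I))) * haz₁
          + ((1 + (b:ℂ)*Complex.I)^2 - (a:ℂ)^2 - 1 - (b:ℂ)^2) * Complex.I_sq
      · have h8 : (-(Complex.I*(a:ℂ)*s₁)).re = a * s₁.im := by
          simp [Complex.mul_re, Complex.mul_im]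
        rw [h8]
        exact mul_pos ha' hs₁im
    have hW2 : ((a:ℂ)^2 + ((b:ℂ) + Complex.I)^2) ^ ((1:ℂ)/2) = Complex.I*(a:ℂ)*s₂ := by
      apply csqrt_eq
      · linear_combination (Complex.I^2*(a:ℂ)^2) * hs₂sq
          + (Complex.I^2*((a:ℂ)*z₂ + (1 - (b:ℂ)*Complex.I))) * haz₂
          + ((1 - (b:ℂ)*Complex.I)^2 - (a:ℂ)^2 - 1 - (b:ℂ)^2) * Complex.I_sq
      · have h8 : (Complex.I*(a:ℂ)*s₂).re = -(a * s₂.im) := by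
          simp [Complex.mul_re, Complex.mul_im]
        rw [h8]
        have h9 : 0 < -s₂.im := by linarith
        nlinarith [mul_pos ha' h9]
    rw [hW1, hW2]
    rw [hz₁, hz₂]
    simp only [Complex.real_smul]
    push_cast
    field_simp
    linear_combination (2*(b:ℂ)) * Complex.I_sq
end
end

section
/- For all real a and b > 0, the second derivative in a of F(a) = ∫_{-1}^{1} √(((1-av)²+b²)/(1-v²)) dv equals ∫_{-1}^{1} b²v² / (((1-av)²+b²)^{3/2}·√(1-v²)) dv, and this quantity is strictly positive; hence F is strictly convex in a. -/
/-!
Factor the integrand as `√((1 - a v)² + b²) · w v` with the weight `w v = 1 / √(1 - v²)`, which is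
integrable on `[-1, 1]` because it is the derivative of `arcsin`. With `φ t = √(t² + b²)` one has
`φ' t = t / √(t² + b²)` and `φ'' t = b² / (t² + b²)^(3/2)`, bounded by `1` and `1 / b`, so one may
differentiate twice under the integral sign, each time picking up a factor `-v`. The resulting
integrand is positive off `v = 0`, so `F'' > 0` and `F` is strictly convex.
-/

open Real MeasureTheory Set intervalIntegral
open scoped Interval

theorem intervalIntegrable_one_div_sqrt_one_sub_sq :
    IntervalIntegrable (fun v : ℝ => 1 / √(1 - v ^ 2)) volume (-1) 1 := by
  refine intervalIntegrable_deriv_of_nonneg (g := arcsin) continuous_arcsin.continuousOn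
    (fun v hv => ?_) (fun v _ => by positivity)
  simp only [min_eq_left, max_eq_right, show (-1 : ℝ) ≤ 1 by norm_num] at hv
  exact hasDerivAt_arcsin hv.1.ne' hv.2.ne

theorem intervalIntegral.hasDerivAt_integral_comp_sub_mul_mul {φ φ' w : ℝ → ℝ} {α β c C : ℝ}
    (hw : IntervalIntegrable w volume α β) (hφ : Continuous φ) (hφ' : Continuous φ')
    (hφ'_le : ∀ t, |φ' t| ≤ C) (hφ_deriv : ∀ t, HasDerivAt φ (φ' t) t) (a₀ : ℝ) :
    HasDerivAt (fun a => ∫ v in α..β, φ (c - a * v) * w v)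
      (∫ v in α..β, φ' (c - a₀ * v) * (-v * w v)) a₀ := by
  have hvw : IntervalIntegrable (fun v => v * w v) volume α β :=
    hw.continuousOn_mul continuousOn_id
  have hline : ∀ a v : ℝ, HasDerivAt (fun a => c - a * v) (-v) a := fun a v => by
    simpa using ((hasDerivAt_id a).mul_const v).const_sub c
  refine (hasDerivAt_integral_of_dominated_loc_of_deriv_le (s := univ)
    (bound := fun v => C * |v * w v|) (F' := fun a v => φ' (c - a * v) * (-v * w v))
    Filter.univ_mem (Filter.Eventually.of_forall fun a => ?_) ?_ ?_ ?_ (hvw.abs.const_mul C)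
    ?_).2
  · exact (hw.continuousOn_mul (by fun_prop)).aestronglyMeasurable_restrict_uIoc
  · exact hw.continuousOn_mul (by fun_prop)
  · exact ((hw.continuousOn_mul continuousOn_id.neg).continuousOn_mul
      (g := fun v => φ' (c - a₀ * v)) (by fun_prop)).aestronglyMeasurable_restrict_uIoc
  · refine Filter.Eventually.of_forall fun v _ a _ => ?_
    rw [norm_mul, neg_mul, norm_neg, Real.norm_eq_abs, Real.norm_eq_abs]
    exact mul_le_mul_of_nonneg_right (hφ'_le _) (abs_nonneg _)
  · refine Filter.Eventually.of_forall fun v _ a _ => ?_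
    simpa [mul_assoc] using ((hφ_deriv _).comp a (hline a v)).mul_const (w v)

theorem intervalIntegral.integral_pos_of_pos_on_Ioo_of_ne {f : ℝ → ℝ} {α β c : ℝ}
    (hf : IntervalIntegrable f volume α β) (hc : c ∈ Ioo α β)
    (hpos : ∀ x ∈ Ioo α β, x ≠ c → 0 < f x) : 0 < ∫ x in α..β, f x := by
  have hαc : IntervalIntegrable f volume α c :=
    hf.mono_set (uIcc_subset_uIcc_left (Icc_subset_uIcc (Ioo_subset_Icc_self hc)))
  have hcβ : IntervalIntegrable f volume c β :=
    hf.mono_set (uIcc_subset_uIcc_right (Icc_subset_uIcc (Ioo_subset_Icc_self hc)))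
  rw [← integral_add_adjacent_intervals hαc hcβ]
  exact add_pos
    (intervalIntegral_pos_of_pos_on hαc
      (fun x hx => hpos x ⟨hx.1, hx.2.trans hc.2⟩ hx.2.ne) hc.1)
    (intervalIntegral_pos_of_pos_on hcβ
      (fun x hx => hpos x ⟨hc.1.trans hx.1, hx.2⟩ hx.1.ne') hc.2)

section Derivatives

variable {f f' f'' : ℝ → ℝ}

theorem iteratedDeriv_two_eq_of_hasDerivAt (hf : ∀ x, HasDerivAt f (f' x) x)
    (hf' : ∀ x, HasDerivAt f' (f'' x) x) (x : ℝ) : iteratedDeriv 2 f x = f'' x := by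
  rw [iteratedDeriv_succ, iteratedDeriv_one, funext fun y => (hf y).deriv]
  exact (hf' x).deriv

theorem strictConvexOn_univ_of_hasDerivAt2_pos (hf : ∀ x, HasDerivAt f (f' x) x)
    (hf' : ∀ x, HasDerivAt f' (f'' x) x) (hf''_pos : ∀ x, 0 < f'' x) :
    StrictConvexOn ℝ univ f := by
  refine StrictMono.strictConvexOn_univ_of_deriv
    (continuous_iff_continuousAt.mpr fun x => (hf x).continuousAt) ?_
  rw [funext fun y => (hf y).deriv]
  exact strictMono_of_hasDerivAt_pos hf' hf''_pos

end Derivatives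

section Hyperbola

variable {b : ℝ}

theorem abs_div_sqrt_sq_add_sq_le_one (t : ℝ) : |t / √(t ^ 2 + b ^ 2)| ≤ 1 := by
  rw [abs_div, abs_of_nonneg (sqrt_nonneg _)]
  exact div_le_one_of_le₀ (abs_le_sqrt (by nlinarith)) (sqrt_nonneg _)

theorem abs_div_rpow_three_halves_le_inv (hb : 0 < b) (t : ℝ) :
    |b ^ 2 / (t ^ 2 + b ^ 2) ^ ((3 : ℝ) / 2)| ≤ b⁻¹ := by
  have hb3 : b ^ 3 ≤ (t ^ 2 + b ^ 2) ^ ((3 : ℝ) / 2) := by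
    calc b ^ 3 = (b ^ 2) ^ ((3 : ℝ) / 2) := by
          rw [← rpow_natCast b 2, ← rpow_mul hb.le]; norm_num
      _ ≤ (t ^ 2 + b ^ 2) ^ ((3 : ℝ) / 2) := by gcongr; nlinarith
  rw [abs_of_nonneg (by positivity), div_le_iff₀ (by positivity)]
  calc b ^ 2 = b⁻¹ * b ^ 3 := by field_simp
    _ ≤ b⁻¹ * (t ^ 2 + b ^ 2) ^ ((3 : ℝ) / 2) := by gcongr

theorem continuous_div_sqrt_sq_add_sq (hb : b ≠ 0) :
    Continuous fun t => t / √(t ^ 2 + b ^ 2) :=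
  continuous_id.div (by fun_prop) fun t => (sqrt_pos.mpr (by positivity)).ne'

theorem continuous_div_rpow_three_halves (hb : b ≠ 0) :
    Continuous fun t => b ^ 2 / (t ^ 2 + b ^ 2) ^ ((3 : ℝ) / 2) :=
  continuous_const.div (by fun_prop (disch := norm_num)) fun t => by positivity

theorem hasDerivAt_sqrt_sq_add_sq (hb : b ≠ 0) (t : ℝ) :
    HasDerivAt (fun t => √(t ^ 2 + b ^ 2)) (t / √(t ^ 2 + b ^ 2)) t := by
  have hQ : t ^ 2 + b ^ 2 ≠ 0 := by positivity
  refine (((hasDerivAt_pow 2 t).add_const (b ^ 2)).sqrt hQ).congr_deriv ?_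
  field_simp
  ring

theorem hasDerivAt_div_sqrt_sq_add_sq (hb : b ≠ 0) (t : ℝ) :
    HasDerivAt (fun t => t / √(t ^ 2 + b ^ 2)) (b ^ 2 / (t ^ 2 + b ^ 2) ^ ((3 : ℝ) / 2)) t := by
  have hQ : 0 < t ^ 2 + b ^ 2 := by positivity
  have hsQ : √(t ^ 2 + b ^ 2) ≠ 0 := (sqrt_pos.mpr hQ).ne'
  have h32 : (t ^ 2 + b ^ 2) ^ ((3 : ℝ) / 2) = (t ^ 2 + b ^ 2) * √(t ^ 2 + b ^ 2) := by
    rw [show (3 : ℝ) / 2 = 1 + 1 / 2 by norm_num, rpow_add hQ, rpow_one, sqrt_eq_rpow]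
  refine ((hasDerivAt_id t).div (hasDerivAt_sqrt_sq_add_sq hb t) hsQ).congr_deriv ?_
  rw [h32, id]
  field_simp
  rw [sq_sqrt hQ.le]
  ring

theorem integral_sq_mul_sq_div_rpow_mul_sqrt_pos (hb : 0 < b) (a : ℝ) :
    0 < ∫ v in (-1:ℝ)..1,
      b ^ 2 * v ^ 2 / (((1 - a * v) ^ 2 + b ^ 2) ^ ((3 : ℝ) / 2) * √(1 - v ^ 2)) := by
  have hf : (fun v : ℝ => b ^ 2 * v ^ 2 / (((1 - a * v) ^ 2 + b ^ 2) ^ ((3 : ℝ) / 2) *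
      √(1 - v ^ 2))) = fun v => b ^ 2 * v ^ 2 / ((1 - a * v) ^ 2 + b ^ 2) ^ ((3 : ℝ) / 2) *
      (1 / √(1 - v ^ 2)) := by
    funext v; ring
  refine integral_pos_of_pos_on_Ioo_of_ne (c := 0) ?_ (by norm_num) fun v hv hv0 => ?_
  · rw [hf]
    exact intervalIntegrable_one_div_sqrt_one_sub_sq.continuousOn_mul
      ((continuous_const.mul (continuous_pow 2)).div (by fun_prop (disch := norm_num))
        fun v => by positivity).continuousOn
  · have hv2 : 0 < 1 - v ^ 2 := by nlinarith [hv.1, hv.2]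
    positivity

end Hyperbola

theorem cone_area_convex (b : ℝ) (hb : 0 < b) :
    (∀ a : ℝ,
      iteratedDeriv 2
          (fun a : ℝ => ∫ v in (-1:ℝ)..1,
            Real.sqrt (((1 - a * v) ^ 2 + b ^ 2) / (1 - v ^ 2))) a =
        (∫ v in (-1:ℝ)..1,
          b ^ 2 * v ^ 2 /
            (((1 - a * v) ^ 2 + b ^ 2) ^ ((3 : ℝ) / 2) * Real.sqrt (1 - v ^ 2))) ∧
      0 < ∫ v in (-1:ℝ)..1,
            b ^ 2 * v ^ 2 /
              (((1 - a * v) ^ 2 + b ^ 2) ^ ((3 : ℝ) / 2) * Real.sqrt (1 - v ^ 2))) ∧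
    StrictConvexOn ℝ Set.univ
      (fun a : ℝ => ∫ v in (-1:ℝ)..1,
        Real.sqrt (((1 - a * v) ^ 2 + b ^ 2) / (1 - v ^ 2))) := by
  set w : ℝ → ℝ := fun v => 1 / √(1 - v ^ 2)
  have hw : IntervalIntegrable w volume (-1) 1 := intervalIntegrable_one_div_sqrt_one_sub_sq
  have hF : (fun a : ℝ => ∫ v in (-1:ℝ)..1, √(((1 - a * v) ^ 2 + b ^ 2) / (1 - v ^ 2))) =
      fun a => ∫ v in (-1:ℝ)..1, √((1 - a * v) ^ 2 + b ^ 2) * w v := by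
    funext a; congr 1; funext v; rw [sqrt_div (by positivity), div_eq_mul_one_div]
  have hF1 := hasDerivAt_integral_comp_sub_mul_mul (c := 1) hw (by fun_prop)
    (continuous_div_sqrt_sq_add_sq hb.ne') abs_div_sqrt_sq_add_sq_le_one
    (hasDerivAt_sqrt_sq_add_sq hb.ne')
  have hF2 : ∀ a, HasDerivAt _ (∫ v in (-1:ℝ)..1,
      b ^ 2 * v ^ 2 / (((1 - a * v) ^ 2 + b ^ 2) ^ ((3 : ℝ) / 2) * √(1 - v ^ 2))) a :=
    fun a => (hasDerivAt_integral_comp_sub_mul_mul (c := 1) (hw.continuousOn_mul (g := fun v => -v)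
      (by fun_prop)) (continuous_div_sqrt_sq_add_sq hb.ne')
      (continuous_div_rpow_three_halves hb.ne') (abs_div_rpow_three_halves_le_inv hb)
      (hasDerivAt_div_sqrt_sq_add_sq hb.ne') a).congr_deriv
      (integral_congr fun v _ => by simp only [w]; ring)
  have hpos := integral_sq_mul_sq_div_rpow_mul_sqrt_pos hb
  rw [hF]
  exact ⟨fun a => ⟨iteratedDeriv_two_eq_of_hasDerivAt hF1 hF2 a, hpos a⟩,
    strictConvexOn_univ_of_hasDerivAt2_pos hF1 hF2 hpos⟩
end

section
/- Let f(a) = (π - 2a + 4√(a²-1) - 4·arcsec(a))/(π + 2a) for a > 1. Then f'(a) = 0 if and only if (π/(2a))·√(a²-1) = arccsc(a), i.e., (π/(2a))·√(a²-1) = arcsin(1/a). -/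
/-!
The numerator's variable part `4 (√(a² - 1) - arcsec a)` has derivative `4 √(a² - 1) / a`, so the
quotient rule gives `f' a = 8 ((π / (2a)) √(a² - 1) - arccsc a) / (π + 2a)²`, using
`arcsec a = π / 2 - arccsc a` to collect terms.
-/

open Real

theorem hasDerivAt_sqrt_sq_sub_one {x : ℝ} (hx : 1 < x ^ 2) :
    HasDerivAt (fun y : ℝ => √(y ^ 2 - 1)) (x / √(x ^ 2 - 1)) x := by
  have hpos : 0 < x ^ 2 - 1 := by linarith
  have hinner : HasDerivAt (fun y : ℝ => y ^ 2 - 1) (2 * x) x := by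
    simpa using (hasDerivAt_pow 2 x).sub_const 1
  refine ((hasDerivAt_sqrt hpos.ne').comp x hinner).congr_deriv ?_
  field_simp

theorem hasDerivAt_arccos_one_div {x : ℝ} (hx : 1 < x) :
    HasDerivAt (fun y : ℝ => arccos (1 / y)) (1 / (x * √(x ^ 2 - 1))) x := by
  have hx0 : 0 < x := one_pos.trans hx
  have hinner : HasDerivAt (fun y : ℝ => 1 / y) (-(1 / x ^ 2)) x := by
    simpa [one_div] using hasDerivAt_inv hx0.ne'
  have hlt : 1 / x < 1 := (div_lt_one hx0).mpr hx
  have hgt : -1 < 1 / x := by linarith [one_div_pos.mpr hx0]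
  have hsqrt : √(1 - (1 / x) ^ 2) = √(x ^ 2 - 1) / x := by
    rw [← sqrt_sq (by positivity : 0 ≤ √(x ^ 2 - 1) / x)]
    congr 1
    rw [div_pow (√(x ^ 2 - 1)), sq_sqrt (by nlinarith)]
    field_simp
  refine ((hasDerivAt_arccos hgt.ne' hlt.ne).comp x hinner).congr_deriv ?_
  rw [hsqrt]
  field_simp

theorem hasDerivAt_sqrt_sq_sub_one_sub_arccos_one_div {x : ℝ} (hx : 1 < x) :
    HasDerivAt (fun y : ℝ => √(y ^ 2 - 1) - arccos (1 / y)) (√(x ^ 2 - 1) / x) x := by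
  have hx0 : 0 < x := one_pos.trans hx
  have hsq : 1 < x ^ 2 := by nlinarith
  have hs : 0 < √(x ^ 2 - 1) := sqrt_pos.mpr (by linarith)
  refine ((hasDerivAt_sqrt_sq_sub_one hsq).sub (hasDerivAt_arccos_one_div hx)).congr_deriv ?_
  field_simp
  rw [sq_sqrt (by linarith)]

theorem hasDerivAt_lateral_ratio {a : ℝ} (ha : 1 < a) :
    HasDerivAt (fun x : ℝ =>
        (π - 2 * x + 4 * √(x ^ 2 - 1) - 4 * arccos (1 / x)) / (π + 2 * x))
      (8 * ((π / (2 * a)) * √(a ^ 2 - 1) - arcsin (1 / a)) / (π + 2 * a) ^ 2) a := by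
  have ha0 : 0 < a := one_pos.trans ha
  have hnum : HasDerivAt (fun x : ℝ => π - 2 * x + 4 * (√(x ^ 2 - 1) - arccos (1 / x)))
      (-2 + 4 * (√(a ^ 2 - 1) / a)) a := by
    have hlin : HasDerivAt (fun x : ℝ => π - 2 * x) (-2) a := by
      simpa using ((hasDerivAt_id a).const_mul 2).const_sub π
    exact hlin.add ((hasDerivAt_sqrt_sq_sub_one_sub_arccos_one_div ha).const_mul 4)
  have hden : HasDerivAt (fun x : ℝ => π + 2 * x) 2 a := by
    simpa using ((hasDerivAt_id a).const_mul 2).const_add π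
  have hfun : (fun x : ℝ =>
      (π - 2 * x + 4 * √(x ^ 2 - 1) - 4 * arccos (1 / x)) / (π + 2 * x)) =
      fun x => (π - 2 * x + 4 * (√(x ^ 2 - 1) - arccos (1 / x))) / (π + 2 * x) := by
    funext x
    ring
  rw [hfun]
  refine (hnum.div hden (by positivity)).congr_deriv ?_
  rw [arcsin_eq_pi_div_two_sub_arccos]
  field_simp
  ring

theorem lateral_ratio_critical_point (a : ℝ) (ha : 1 < a) :
    deriv (fun a : ℝ =>
        (π - 2 * a + 4 * Real.sqrt (a ^ 2 - 1) - 4 * Real.arccos (1 / a)) /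
          (π + 2 * a)) a = 0 ↔
      (π / (2 * a)) * Real.sqrt (a ^ 2 - 1) = Real.arcsin (1 / a) := by
  have hden : (π + 2 * a) ^ 2 ≠ 0 := by positivity
  rw [(hasDerivAt_lateral_ratio ha).deriv, div_eq_zero_iff, or_iff_left hden,
    mul_eq_zero, or_iff_right (by norm_num), sub_eq_zero]
end

section
/- If a > 1 satisfies (π/a)·(a - √(a²-1)) = arccos(1/a), and x = (π/a)·(a - √(a²-1)), then w = π - x satisfies w = π·sin(w). -/
open Real

theorem total_ratio_sine_equation (a : ℝ) (ha : 1 < a)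
    (h : (π / a) * (a - Real.sqrt (a ^ 2 - 1)) = Real.arccos (1 / a)) :
    π - (π / a) * (a - Real.sqrt (a ^ 2 - 1)) =
      π * Real.sin (π - (π / a) * (a - Real.sqrt (a ^ 2 - 1))) := by
  have ha0 : (0:ℝ) < a := lt_trans one_pos ha
  have h1 : Real.sin (π - (π / a) * (a - Real.sqrt (a ^ 2 - 1)))
      = Real.sqrt (1 - (1/a)^2) := by
    rw [Real.sin_pi_sub, h, Real.sin_arccos]
  rw [h1]
  have h2 : Real.sqrt (1 - (1/a)^2) = Real.sqrt (a^2 - 1) / a := by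
    have e : 1 - (1/a)^2 = (a^2 - 1) / a^2 := by field_simp
    rw [e, Real.sqrt_div (by nlinarith), Real.sqrt_sq ha0.le]
  rw [h2]
  field_simp
  ring
end

section
/- The equation w = π·sin(w) has a unique solution w in the open interval (π/2, π), and this solution satisfies 2.313 < w < 2.314. -/
open Real

private lemma aux_sin_ge_cubic {x : ℝ} (hx : 0 ≤ x) : x - x ^ 3 / 6 ≤ Real.sin x := by
  have hd : ∀ y : ℝ, HasDerivAt (fun y : ℝ => Real.sin y - (y - y ^ 3 / 6))
      (Real.cos y - (1 - (3 : ℕ) * y ^ 2 / 6)) y := fun y =>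
    (Real.hasDerivAt_sin y).sub ((hasDerivAt_id y).sub ((hasDerivAt_pow 3 y).div_const 6))
  have h : MonotoneOn (fun y : ℝ => Real.sin y - (y - y ^ 3 / 6)) (Set.Ici 0) := by
    apply monotoneOn_of_deriv_nonneg (convex_Ici 0)
    case hf' => exact fun y _ => (hd y).differentiableAt.differentiableWithinAt
    · exact (Real.continuous_sin.sub (by continuity)).continuousOn
    · intro y _
      rw [(hd y).deriv]
      have := Real.one_sub_sq_div_two_le_cos (x := y)
      push_cast
      nlinarith
  have := h (Set.mem_Ici.2 le_rfl) (Set.mem_Ici.2 hx) hx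
  simp only [Real.sin_zero] at this
  nlinarith [this]

private lemma aux_cos_le_quartic {x : ℝ} (hx : 0 ≤ x) :
    Real.cos x ≤ 1 - x ^ 2 / 2 + x ^ 4 / 24 := by
  have hd : ∀ y : ℝ, HasDerivAt (fun y : ℝ => (1 - y ^ 2 / 2 + y ^ 4 / 24) - Real.cos y)
      ((0 - (2 : ℕ) * y ^ 1 / 2 + (4 : ℕ) * y ^ 3 / 24) - (-Real.sin y)) y := fun y => by
    exact (((hasDerivAt_const y (1 : ℝ)).sub ((hasDerivAt_pow 2 y).div_const 2)).add
      ((hasDerivAt_pow 4 y).div_const 24)).sub (Real.hasDerivAt_cos y)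
  have h : MonotoneOn (fun y : ℝ => (1 - y ^ 2 / 2 + y ^ 4 / 24) - Real.cos y) (Set.Ici 0) := by
    apply monotoneOn_of_deriv_nonneg (convex_Ici 0)
    case hf' => exact fun y _ => (hd y).differentiableAt.differentiableWithinAt
    · exact ((by continuity : Continuous fun y : ℝ => 1 - y ^ 2 / 2 + y ^ 4 / 24).sub
        Real.continuous_cos).continuousOn
    · intro y hy
      rw [(hd y).deriv]
      have hy0 : (0 : ℝ) ≤ y := le_of_lt (by simpa using hy)
      have := aux_sin_ge_cubic hy0
      push_cast
      nlinarith
  have := h (Set.mem_Ici.2 le_rfl) (Set.mem_Ici.2 hx) hx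
  simp only [Real.cos_zero] at this
  nlinarith [this]

private lemma aux_sin_le_quintic {x : ℝ} (hx : 0 ≤ x) :
    Real.sin x ≤ x - x ^ 3 / 6 + x ^ 5 / 120 := by
  have hd : ∀ y : ℝ, HasDerivAt (fun y : ℝ => (y - y ^ 3 / 6 + y ^ 5 / 120) - Real.sin y)
      ((1 - (3 : ℕ) * y ^ 2 / 6 + (5 : ℕ) * y ^ 4 / 120) - Real.cos y) y := fun y =>
    (((hasDerivAt_id y).sub ((hasDerivAt_pow 3 y).div_const 6)).add
      ((hasDerivAt_pow 5 y).div_const 120)).sub (Real.hasDerivAt_sin y)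
  have h : MonotoneOn (fun y : ℝ => (y - y ^ 3 / 6 + y ^ 5 / 120) - Real.sin y) (Set.Ici 0) := by
    apply monotoneOn_of_deriv_nonneg (convex_Ici 0)
    case hf' => exact fun y _ => (hd y).differentiableAt.differentiableWithinAt
    · exact ((by continuity : Continuous fun y : ℝ => y - y ^ 3 / 6 + y ^ 5 / 120).sub
        Real.continuous_sin).continuousOn
    · intro y hy
      rw [(hd y).deriv]
      have hy0 : (0 : ℝ) ≤ y := le_of_lt (by simpa using hy)
      have := aux_cos_le_quartic hy0
      push_cast
      nlinarith
  have := h (Set.mem_Ici.2 le_rfl) (Set.mem_Ici.2 hx) hx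
  simp only [Real.sin_zero] at this
  nlinarith [this]

private lemma aux_cos_ge_sextic {x : ℝ} (hx : 0 ≤ x) :
    1 - x ^ 2 / 2 + x ^ 4 / 24 - x ^ 6 / 720 ≤ Real.cos x := by
  have hd : ∀ y : ℝ, HasDerivAt
      (fun y : ℝ => Real.cos y - (1 - y ^ 2 / 2 + y ^ 4 / 24 - y ^ 6 / 720))
      ((-Real.sin y) - (0 - (2 : ℕ) * y ^ 1 / 2 + (4 : ℕ) * y ^ 3 / 24 -
        (6 : ℕ) * y ^ 5 / 720)) y := fun y =>
    (Real.hasDerivAt_cos y).sub ((((hasDerivAt_const y (1 : ℝ)).sub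
      ((hasDerivAt_pow 2 y).div_const 2)).add ((hasDerivAt_pow 4 y).div_const 24)).sub
      ((hasDerivAt_pow 6 y).div_const 720))
  have h : MonotoneOn
      (fun y : ℝ => Real.cos y - (1 - y ^ 2 / 2 + y ^ 4 / 24 - y ^ 6 / 720)) (Set.Ici 0) := by
    apply monotoneOn_of_deriv_nonneg (convex_Ici 0)
    case hf' => exact fun y _ => (hd y).differentiableAt.differentiableWithinAt
    · exact (Real.continuous_cos.sub (by continuity)).continuousOn
    · intro y hy
      rw [(hd y).deriv]
      have hy0 : (0 : ℝ) ≤ y := le_of_lt (by simpa using hy)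
      have := aux_sin_le_quintic hy0
      push_cast
      nlinarith
  have := h (Set.mem_Ici.2 le_rfl) (Set.mem_Ici.2 hx) hx
  simp only [Real.cos_zero] at this
  nlinarith [this]

private lemma aux_sin_ge_septic {x : ℝ} (hx : 0 ≤ x) :
    x - x ^ 3 / 6 + x ^ 5 / 120 - x ^ 7 / 5040 ≤ Real.sin x := by
  have hd : ∀ y : ℝ, HasDerivAt
      (fun y : ℝ => Real.sin y - (y - y ^ 3 / 6 + y ^ 5 / 120 - y ^ 7 / 5040))
      (Real.cos y - (1 - (3 : ℕ) * y ^ 2 / 6 + (5 : ℕ) * y ^ 4 / 120 -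
        (7 : ℕ) * y ^ 6 / 5040)) y := fun y =>
    (Real.hasDerivAt_sin y).sub ((((hasDerivAt_id y).sub
      ((hasDerivAt_pow 3 y).div_const 6)).add ((hasDerivAt_pow 5 y).div_const 120)).sub
      ((hasDerivAt_pow 7 y).div_const 5040))
  have h : MonotoneOn
      (fun y : ℝ => Real.sin y - (y - y ^ 3 / 6 + y ^ 5 / 120 - y ^ 7 / 5040)) (Set.Ici 0) := by
    apply monotoneOn_of_deriv_nonneg (convex_Ici 0)
    case hf' => exact fun y _ => (hd y).differentiableAt.differentiableWithinAt
    · exact (Real.continuous_sin.sub (by continuity)).continuousOn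
    · intro y hy
      rw [(hd y).deriv]
      have hy0 : (0 : ℝ) ≤ y := le_of_lt (by simpa using hy)
      have := aux_cos_ge_sextic hy0
      push_cast
      nlinarith
  have := h (Set.mem_Ici.2 le_rfl) (Set.mem_Ici.2 hx) hx
  simp only [Real.sin_zero] at this
  nlinarith [this]

private lemma aux_lb : (2.313 : ℝ) < π * Real.sin 2.313 := by
  have hpi1 : (3.141592 : ℝ) < π := Real.pi_gt_d6
  have hpi2 : π < 3.141593 := Real.pi_lt_d6
  have h1 : Real.sin 2.313 = Real.sin (π - 2.313) := (Real.sin_pi_sub 2.313).symm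
  have h2 : Real.sin 0.828592 < Real.sin (π - 2.313) := by
    apply Real.sin_lt_sin_of_lt_of_le_pi_div_two (by linarith) (by linarith) (by linarith)
  have h3 : (0.828592 : ℝ) - 0.828592 ^ 3 / 6 + 0.828592 ^ 5 / 120 - 0.828592 ^ 7 / 5040 ≤
      Real.sin 0.828592 := aux_sin_ge_septic (by norm_num)
  have h4 : (0.736251 : ℝ) < Real.sin 2.313 := by
    rw [h1]; nlinarith [h2, h3]
  nlinarith

private lemma aux_ub : π * Real.sin 2.314 < 2.314 := by
  have hpi1 : (3.141592 : ℝ) < π := Real.pi_gt_d6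
  have hpi2 : π < 3.141593 := Real.pi_lt_d6
  have h1 : Real.sin 2.314 = Real.sin (π - 2.314) := (Real.sin_pi_sub 2.314).symm
  have h2 : Real.sin (π - 2.314) < Real.sin 0.827593 := by
    apply Real.sin_lt_sin_of_lt_of_le_pi_div_two (by linarith) (by linarith) (by linarith)
  have h3 : Real.sin 0.827593 ≤
      (0.827593 : ℝ) - 0.827593 ^ 3 / 6 + 0.827593 ^ 5 / 120 :=
    aux_sin_le_quintic (by norm_num)
  have h4 : Real.sin 2.314 < 0.73636 := by
    rw [h1]; nlinarith [h2, h3]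
  have h5 : (0 : ℝ) < Real.sin 2.314 := by
    rw [h1]
    apply Real.sin_pos_of_pos_of_lt_pi <;> linarith
  nlinarith

theorem eta_one_over_pi :
    (∃! w : ℝ, w ∈ Set.Ioo (π / 2) π ∧ w = π * Real.sin w) ∧
    ∀ w : ℝ, w ∈ Set.Ioo (π / 2) π → w = π * Real.sin w →
      2.313 < w ∧ w < 2.314 := by
  have hpi1 : (3.141592 : ℝ) < π := Real.pi_gt_d6
  have hpi2 : π < 3.141593 := Real.pi_lt_d6
  set g : ℝ → ℝ := fun w => w - π * Real.sin w with hg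
  have hgc : Continuous g := by continuity
  have hd : ∀ y : ℝ, HasDerivAt g (1 - π * Real.cos y) y := fun y =>
    (hasDerivAt_id y).sub ((Real.hasDerivAt_sin y).const_mul π)
  have hmono : StrictMonoOn g (Set.Icc (π / 2) π) := by
    apply strictMonoOn_of_deriv_pos (convex_Icc _ _) hgc.continuousOn
    intro y hy
    rw [interior_Icc] at hy
    rw [(hd y).deriv]
    have hc : Real.cos y ≤ 0 :=
      Real.cos_nonpos_of_pi_div_two_le_of_le hy.1.le (by linarith [hy.2])
    nlinarith [Real.pi_pos]
  have hsub : Set.Ioo (π / 2) π ⊆ Set.Icc (π / 2) π := Set.Ioo_subset_Icc_self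
  -- existence via IVT
  have hivt : (0 : ℝ) ∈ g '' Set.Ioo (π / 2) π := by
    apply intermediate_value_Ioo (by linarith) hgc.continuousOn
    constructor
    · simp only [hg, Real.sin_pi_div_two]
      linarith
    · simp only [hg, Real.sin_pi]
      linarith
  obtain ⟨w, hwmem, hw0⟩ := hivt
  have hweq : w = π * Real.sin w := by
    have : w - π * Real.sin w = 0 := hw0
    linarith
  have key : ∀ v : ℝ, v ∈ Set.Ioo (π / 2) π → v = π * Real.sin v → v = w := by
    intro v hv hve
    have hgv : g v = 0 := by simp only [hg]; linarith
    exact hmono.injOn (hsub hv) (hsub hwmem) (by rw [hgv, hw0])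
  constructor
  · exact ⟨w, ⟨hwmem, hweq⟩, fun v hv => key v hv.1 hv.2⟩
  · intro v hv hve
    have hgv : g v = 0 := by simp only [hg]; linarith
    have hmem1 : (2.313 : ℝ) ∈ Set.Icc (π / 2) π := by constructor <;> norm_num <;> linarith
    have hmem2 : (2.314 : ℝ) ∈ Set.Icc (π / 2) π := by constructor <;> norm_num <;> linarith
    constructor
    · have h1 : g 2.313 < g v := by
        rw [hgv]; simp only [hg]; linarith [aux_lb]
      exact (hmono.lt_iff_lt hmem1 (hsub hv)).mp h1
    · have h2 : g v < g 2.314 := by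
        rw [hgv]; simp only [hg]; linarith [aux_ub]
      exact (hmono.lt_iff_lt (hsub hv) hmem2).mp h2
end

section
/- For a > 1, lim_{b→0⁺} ∫_0^1 (1 + a² + b² - 2av)·b / (((1-av)²+b²)·√(1-v²)) dv = π·√(a²-1), while lim_{b→0⁺} ∫_{-1}^0 (1 + a² + b² - 2av)·b / (((1-av)²+b²)·√(1-v²)) dv = 0. -/
/-!
Since `1 + a² + b² - 2av = (1 - av)² + b² + a²(1 - v²)`, the integrand splits as
`b / √(1 - v²) + K_{b/a}(v) · π a √(1 - v²)`, where `K_γ` is the Cauchy density with location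
`1/a` and scale `γ`. The first term is `b` times an integrable function, so it contributes `0`
in the limit. The Cauchy densities form an approximate identity as `γ → 0⁺`, so the second term
tends to the value at `1/a` of `π a √(1 - v²)` cut off to the interval of integration: this is
`π √(a² - 1)` on `[0, 1]`, which contains `1/a` in its interior, and `0` on `[-1, 0]`.
-/

open Real Filter Topology MeasureTheory Set Module Bornology ProbabilityTheory

lemma abs_mul_cauchyPDFReal_le (x : ℝ) : |x| * cauchyPDFReal 0 1 x ≤ π⁻¹ * |x|⁻¹ := by
  rcases eq_or_ne x 0 with rfl | hx
  · simp
  have hx' : 0 < |x| := abs_pos.2 hx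
  rw [cauchyPDFReal_def, NNReal.coe_one, one_pow, mul_one, sub_zero, ← sq_abs x,
    mul_left_comm, mul_le_mul_iff_of_pos_left (by positivity), ← div_eq_mul_inv,
    div_le_iff₀ (by positivity), inv_mul_eq_div, le_div_iff₀ hx']
  nlinarith

lemma tendsto_norm_pow_finrank_mul_cauchyPDFReal :
    Tendsto (fun x : ℝ ↦ ‖x‖ ^ finrank ℝ ℝ * cauchyPDFReal 0 1 x) (cobounded ℝ) (𝓝 0) := by
  have hinv : Tendsto (fun x : ℝ ↦ π⁻¹ * |x|⁻¹) (cobounded ℝ) (𝓝 0) := by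
    simpa using ((tendsto_norm_cobounded_atTop (E := ℝ)).inv_tendsto_atTop).const_mul π⁻¹
  refine squeeze_zero (fun x ↦ ?_) (fun x ↦ ?_) hinv
  · have := cauchyPDF_pos 0 one_ne_zero x
    positivity
  · simpa using abs_mul_cauchyPDFReal_le x

lemma cauchyPDFReal_eq_mul_comp_smul (x₀ : ℝ) {γ : ℝ} (hγ : 0 < γ) (x : ℝ) :
    cauchyPDFReal x₀ γ.toNNReal x = γ⁻¹ ^ finrank ℝ ℝ * cauchyPDFReal 0 1 (γ⁻¹ • (x₀ - x)) := by
  simp only [cauchyPDFReal_def, Real.coe_toNNReal _ hγ.le, finrank_self, pow_one, smul_eq_mul,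
    NNReal.coe_one]
  field_simp
  ring

section ApproximateIdentity

variable {E : Type*} [NormedAddCommGroup E] [NormedSpace ℝ E] [CompleteSpace E]

theorem tendsto_integral_cauchyPDFReal_smul {g : ℝ → E} (hg : Integrable g) {x₀ : ℝ}
    (hcg : ContinuousAt g x₀) :
    Tendsto (fun γ : ℝ ↦ ∫ x, cauchyPDFReal x₀ γ.toNNReal x • g x) (𝓝[>] 0) (𝓝 (g x₀)) := by
  have h := (tendsto_integral_comp_smul_smul_of_integrable' (μ := volume)
    (fun x ↦ (cauchyPDF_pos 0 one_ne_zero x).le) (integral_cauchyPDFReal_eq_one 0 one_ne_zero)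
    tendsto_norm_pow_finrank_mul_cauchyPDFReal hg hcg).comp tendsto_inv_nhdsGT_zero
  refine h.congr' ?_
  filter_upwards [self_mem_nhdsWithin] with γ (hγ : 0 < γ)
  simp only [Function.comp_apply, cauchyPDFReal_eq_mul_comp_smul x₀ hγ]

theorem tendsto_intervalIntegral_cauchyPDFReal_smul {g : ℝ → E} {l u x₀ : ℝ} (hlu : l ≤ u)
    (hg : IntervalIntegrable g volume l u) (hcg : ContinuousAt ((Ioc l u).indicator g) x₀) :
    Tendsto (fun γ : ℝ ↦ ∫ x in l..u, cauchyPDFReal x₀ γ.toNNReal x • g x) (𝓝[>] 0)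
      (𝓝 ((Ioc l u).indicator g x₀)) := by
  refine (tendsto_integral_cauchyPDFReal_smul
    ((integrable_indicator_iff measurableSet_Ioc).2 hg.1) hcg).congr fun γ ↦ ?_
  rw [intervalIntegral.integral_of_le hlu, ← integral_indicator measurableSet_Ioc]
  simp only [indicator_smul]

end ApproximateIdentity

lemma intervalIntegrable_inv_sqrt_one_sub_sq :
    IntervalIntegrable (fun v : ℝ ↦ (√(1 - v ^ 2))⁻¹) volume (-1) 1 := by
  refine intervalIntegral.intervalIntegrable_deriv_of_nonneg continuous_arcsin.continuousOn
    (fun x hx ↦ ?_) (fun x _ ↦ by positivity)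
  rw [min_eq_left (by norm_num), max_eq_right (by norm_num)] at hx
  simpa using hasDerivAt_arcsin hx.1.ne' hx.2.ne

lemma mean_curvature_integrand_eq {a b : ℝ} (ha : 0 < a) (hb : 0 < b) (v : ℝ) :
    (1 + a ^ 2 + b ^ 2 - 2 * a * v) * b / (((1 - a * v) ^ 2 + b ^ 2) * √(1 - v ^ 2))
      = b * (√(1 - v ^ 2))⁻¹
        + cauchyPDFReal (1 / a) (b / a).toNNReal v * (π * a * √(1 - v ^ 2)) := by
  rw [cauchyPDFReal_def, Real.coe_toNNReal _ (by positivity)]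
  rcases (Real.sqrt_nonneg (1 - v ^ 2)).eq_or_lt with hs | hs
  · simp [← hs]
  have hsq : √(1 - v ^ 2) ^ 2 = 1 - v ^ 2 := Real.sq_sqrt (Real.sqrt_pos.1 hs).le
  field_simp
  linear_combination (-a ^ 2 * ((1 - a * v) ^ 2 + b ^ 2)) * hsq

theorem tendsto_intervalIntegral_mean_curvature {a l u : ℝ} (ha : 0 < a) (hl : -1 ≤ l)
    (hlu : l ≤ u) (hu : u ≤ 1)
    (hc : ContinuousAt ((Ioc l u).indicator fun v ↦ π * a * √(1 - v ^ 2)) (1 / a)) :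
    Tendsto (fun b : ℝ ↦ ∫ v in l..u,
        (1 + a ^ 2 + b ^ 2 - 2 * a * v) * b / (((1 - a * v) ^ 2 + b ^ 2) * √(1 - v ^ 2)))
      (𝓝[>] 0) (𝓝 ((Ioc l u).indicator (fun v ↦ π * a * √(1 - v ^ 2)) (1 / a))) := by
  have hsub : uIcc l u ⊆ uIcc (-1) 1 := by
    rw [uIcc_of_le hlu, uIcc_of_le (by norm_num)]
    exact Icc_subset_Icc hl hu
  have hinv : IntervalIntegrable (fun v : ℝ ↦ (√(1 - v ^ 2))⁻¹) volume l u :=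
    intervalIntegrable_inv_sqrt_one_sub_sq.mono_set hsub
  have hG : Continuous fun v : ℝ ↦ π * a * √(1 - v ^ 2) := by fun_prop
  have hdiv : Tendsto (fun b ↦ b / a) (𝓝[>] 0) (𝓝[>] 0) :=
    tendsto_nhdsWithin_of_tendsto_nhds_of_eventually_within _
      (((continuous_id.div_const a).tendsto' 0 0 (zero_div a)).mono_left nhdsWithin_le_nhds)
      (eventually_nhdsWithin_of_forall fun b (hb : 0 < b) ↦ div_pos hb ha)
  have hsing : Tendsto (fun b ↦ b * ∫ v in l..u, (√(1 - v ^ 2))⁻¹) (𝓝[>] 0) (𝓝 0) :=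
    ((continuous_mul_const _).tendsto' 0 0 (zero_mul _)).mono_left nhdsWithin_le_nhds
  have hpeak :=
    (tendsto_intervalIntegral_cauchyPDFReal_smul hlu (hG.intervalIntegrable l u) hc).comp hdiv
  refine (zero_add (M := ℝ) _ ▸ hsing.add hpeak).congr' ?_
  filter_upwards [self_mem_nhdsWithin] with b (hb : 0 < b)
  simp only [Function.comp_apply, smul_eq_mul, mean_curvature_integrand_eq ha hb]
  rw [intervalIntegral.integral_add (hinv.const_mul b)
    ((integrable_cauchyPDFReal _).intervalIntegrable.mul_continuousOn hG.continuousOn),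
    intervalIntegral.integral_const_mul]

theorem half_cone_mean_curvature_limits (a : ℝ) (ha : 1 < a) :
    Tendsto
      (fun b : ℝ => ∫ v in (0:ℝ)..1,
        (1 + a ^ 2 + b ^ 2 - 2 * a * v) * b /
          (((1 - a * v) ^ 2 + b ^ 2) * Real.sqrt (1 - v ^ 2)))
      (nhdsWithin 0 (Set.Ioi 0)) (nhds (π * Real.sqrt (a ^ 2 - 1))) ∧
    Tendsto
      (fun b : ℝ => ∫ v in (-1:ℝ)..0,
        (1 + a ^ 2 + b ^ 2 - 2 * a * v) * b /
          (((1 - a * v) ^ 2 + b ^ 2) * Real.sqrt (1 - v ^ 2)))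
      (nhdsWithin 0 (Set.Ioi 0)) (nhds 0) := by
  have ha0 : 0 < a := one_pos.trans ha
  have hx₀ : 1 / a ∈ Ioo (0 : ℝ) 1 := ⟨by positivity, (div_lt_one ha0).2 ha⟩
  have hvalue : π * a * √(1 - (1 / a) ^ 2) = π * √(a ^ 2 - 1) := by
    rw [mul_assoc, ← Real.sqrt_sq ha0.le, ← Real.sqrt_mul (sq_nonneg a), Real.sqrt_sq ha0.le]
    congr 2
    field_simp
  have hupper : (Ioc 0 1).indicator (fun v ↦ π * a * √(1 - v ^ 2)) =ᶠ[𝓝 (1 / a)]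
      fun v ↦ π * a * √(1 - v ^ 2) :=
    eventually_of_mem (Ioo_mem_nhds hx₀.1 hx₀.2) fun v hv ↦
      indicator_of_mem (Ioo_subset_Ioc_self hv) _
  have hlower : (Ioc (-1) 0).indicator (fun v ↦ π * a * √(1 - v ^ 2)) =ᶠ[𝓝 (1 / a)]
      fun _ ↦ 0 :=
    eventually_of_mem (Ioi_mem_nhds hx₀.1) fun v hv ↦
      indicator_of_notMem (fun h ↦ not_lt.2 h.2 hv) _
  constructor
  · have h := tendsto_intervalIntegral_mean_curvature ha0 (by norm_num) zero_le_one le_rfl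
      ((by fun_prop : Continuous fun v ↦ π * a * √(1 - v ^ 2)).continuousAt.congr hupper.symm)
    rwa [hupper.eq_of_nhds, hvalue] at h
  · have h := tendsto_intervalIntegral_mean_curvature ha0 le_rfl (by norm_num) zero_le_one
      (continuousAt_const.congr hlower.symm)
    rwa [hlower.eq_of_nhds] at h
end

section
/- For a > 1, lim_{b→0⁺} 2∫_0^1 (1/√(1-v²))·arccos((av-1)/√((1-av)²+b²)) dv = 2π·arcsin(1/a), and lim_{b→0⁺} 2∫_{-1}^0 (1/√(1-v²))·arccos((av-1)/√((1-av)²+b²)) dv = π². -/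
open Real Filter Topology MeasureTheory Set

noncomputable def Fc (a b v : ℝ) : ℝ :=
  (1 / Real.sqrt (1 - v ^ 2)) *
    Real.arccos ((a * v - 1) / Real.sqrt ((1 - a * v) ^ 2 + b ^ 2))

lemma measurable_Fc (a b : ℝ) : Measurable (Fc a b) := by
  unfold Fc
  exact (measurable_const.div (Real.continuous_sqrt.measurable.comp (by fun_prop))).mul
    (Real.continuous_arccos.measurable.comp ((by fun_prop : Measurable fun v : ℝ => a * v - 1).div
      (Real.continuous_sqrt.measurable.comp (by fun_prop))))

lemma integrableOn_arcsinDeriv :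
    IntegrableOn (fun v : ℝ => 1 / Real.sqrt (1 - v ^ 2)) (Set.Ioc (-1) 1) := by
  apply intervalIntegral.integrableOn_deriv_of_nonneg Real.continuous_arcsin.continuousOn
  · intro x hx
    exact Real.hasDerivAt_arcsin (ne_of_gt hx.1) (ne_of_lt hx.2)
  · intro x hx; positivity

lemma integral_arcsinDeriv {c d : ℝ} (hc : -1 ≤ c) (hcd : c ≤ d) (hd : d ≤ 1) :
    ∫ v in c..d, 1 / Real.sqrt (1 - v ^ 2) = Real.arcsin d - Real.arcsin c := by
  refine intervalIntegral.integral_eq_sub_of_hasDeriv_right_of_le hcd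
    Real.continuous_arcsin.continuousOn (fun x hx => ?_) ?_
  · exact (Real.hasDerivAt_arcsin (by linarith [hx.1] : x ≠ -1)
      (by linarith [hx.2] : x ≠ 1)).hasDerivWithinAt
  · rw [intervalIntegrable_iff_integrableOn_Ioc_of_le hcd]
    exact integrableOn_arcsinDeriv.mono_set (Set.Ioc_subset_Ioc hc hd)

lemma sqrt_tendsto (a v : ℝ) :
    Tendsto (fun b : ℝ => Real.sqrt ((1 - a * v) ^ 2 + b ^ 2)) (𝓝 0) (𝓝 |1 - a * v|) := by
  have hcont : Continuous fun b : ℝ => Real.sqrt ((1 - a * v) ^ 2 + b ^ 2) :=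
    (continuous_const.add (continuous_pow 2)).sqrt
  have := hcont.tendsto 0
  simpa [Real.sqrt_sq_eq_abs] using this

lemma tendsto_Fc_lt (a v : ℝ) (h : a * v < 1) :
    Tendsto (fun b : ℝ => Fc a b v) (𝓝[>] (0:ℝ))
      (𝓝 ((1 / Real.sqrt (1 - v ^ 2)) * π)) := by
  have hne : (1:ℝ) - a * v ≠ 0 := by linarith
  have h1 : Tendsto (fun b : ℝ => Real.sqrt ((1 - a * v) ^ 2 + b ^ 2)) (𝓝 0)
      (𝓝 (1 - a * v)) := by
    simpa [abs_of_pos (by linarith : (0:ℝ) < 1 - a * v)] using sqrt_tendsto a v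
  have h2 : Tendsto (fun b : ℝ => (a * v - 1) / Real.sqrt ((1 - a * v) ^ 2 + b ^ 2)) (𝓝 0)
      (𝓝 (-1)) := by
    have := (tendsto_const_nhds (x := a * v - 1)).div h1 hne
    have hval : (a * v - 1) / (1 - a * v) = -1 := by
      rw [div_eq_iff hne]; ring
    rwa [hval] at this
  have h3 := (Real.continuous_arccos.tendsto (-1)).comp h2
  rw [Real.arccos_neg_one] at h3
  exact (h3.mono_left nhdsWithin_le_nhds).const_mul _

lemma tendsto_Fc_gt (a v : ℝ) (h : 1 < a * v) :
    Tendsto (fun b : ℝ => Fc a b v) (𝓝[>] (0:ℝ))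
      (𝓝 ((1 / Real.sqrt (1 - v ^ 2)) * 0)) := by
  have hne : a * v - 1 ≠ 0 := by linarith
  have h1 : Tendsto (fun b : ℝ => Real.sqrt ((1 - a * v) ^ 2 + b ^ 2)) (𝓝 0)
      (𝓝 (a * v - 1)) := by
    have : |1 - a * v| = a * v - 1 := by rw [abs_of_neg (by linarith)]; ring
    simpa [this] using sqrt_tendsto a v
  have h2 : Tendsto (fun b : ℝ => (a * v - 1) / Real.sqrt ((1 - a * v) ^ 2 + b ^ 2)) (𝓝 0)
      (𝓝 1) := by
    have := (tendsto_const_nhds (x := a * v - 1)).div h1 hne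
    rwa [div_self hne] at this
  have h3 := (Real.continuous_arccos.tendsto 1).comp h2
  rw [Real.arccos_one] at h3
  exact (h3.mono_left nhdsWithin_le_nhds).const_mul _

lemma bound_int {c d : ℝ} (hc : -1 ≤ c) (hd : d ≤ 1) :
    IntegrableOn (fun v : ℝ => (1 / Real.sqrt (1 - v ^ 2)) * π) (Set.Ioc c d) :=
  (integrableOn_arcsinDeriv.mono_set (Set.Ioc_subset_Ioc hc hd)).mul_const π

lemma dct_piece (a : ℝ) {c d : ℝ} (hc : -1 ≤ c) (hcd : c ≤ d) (hd : d ≤ 1)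
    (L : ℝ → ℝ)
    (hL : ∀ᵐ v ∂(volume.restrict (Set.Ioc c d)),
      Tendsto (fun b => Fc a b v) (𝓝[>] (0:ℝ)) (𝓝 (L v))) :
    Tendsto (fun b : ℝ => ∫ v in c..d, Fc a b v) (𝓝[>] (0:ℝ))
      (𝓝 (∫ v in Set.Ioc c d, L v)) := by
  have hrw : (fun b : ℝ => ∫ v in c..d, Fc a b v)
      = fun b : ℝ => ∫ v in Set.Ioc c d, Fc a b v := by
    funext b; exact intervalIntegral.integral_of_le hcd
  rw [hrw]
  refine MeasureTheory.tendsto_integral_filter_of_dominated_convergence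
    (fun v => (1 / Real.sqrt (1 - v ^ 2)) * π) ?_ ?_ (bound_int hc hd) hL
  · exact Eventually.of_forall fun b => ((measurable_Fc a b).aestronglyMeasurable).restrict
  · refine Eventually.of_forall fun b => Eventually.of_forall fun v => ?_
    have h1 : (0:ℝ) ≤ 1 / Real.sqrt (1 - v ^ 2) := by positivity
    have h2 : (0:ℝ) ≤ Real.arccos ((a * v - 1) / Real.sqrt ((1 - a * v) ^ 2 + b ^ 2)) :=
      Real.arccos_nonneg _
    rw [Real.norm_eq_abs, Fc, abs_of_nonneg (mul_nonneg h1 h2)]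
    exact mul_le_mul_of_nonneg_left (Real.arccos_le_pi _) h1

lemma intervalIntegrable_Fc (a b : ℝ) {c d : ℝ} (hc : -1 ≤ c) (hcd : c ≤ d) (hd : d ≤ 1) :
    IntervalIntegrable (Fc a b) volume c d := by
  rw [intervalIntegrable_iff_integrableOn_Ioc_of_le hcd]
  refine Integrable.mono (bound_int hc hd) ((measurable_Fc a b).aestronglyMeasurable).restrict ?_
  refine Eventually.of_forall fun v => ?_
  have h1 : (0:ℝ) ≤ 1 / Real.sqrt (1 - v ^ 2) := by positivity
  have h2 : (0:ℝ) ≤ Real.arccos ((a * v - 1) / Real.sqrt ((1 - a * v) ^ 2 + b ^ 2)) :=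
    Real.arccos_nonneg _
  rw [Real.norm_eq_abs, Real.norm_eq_abs, Fc, abs_of_nonneg (mul_nonneg h1 h2),
    abs_of_nonneg (mul_nonneg h1 Real.pi_pos.le)]
  exact mul_le_mul_of_nonneg_left (Real.arccos_le_pi _) h1

theorem half_cone_dihedral_limits (a : ℝ) (ha : 1 < a) :
    Tendsto
      (fun b : ℝ => 2 * ∫ v in (0:ℝ)..1,
        (1 / Real.sqrt (1 - v ^ 2)) *
          Real.arccos ((a * v - 1) / Real.sqrt ((1 - a * v) ^ 2 + b ^ 2)))
      (nhdsWithin 0 (Set.Ioi 0)) (nhds (2 * π * Real.arcsin (1 / a))) ∧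
    Tendsto
      (fun b : ℝ => 2 * ∫ v in (-1:ℝ)..0,
        (1 / Real.sqrt (1 - v ^ 2)) *
          Real.arccos ((a * v - 1) / Real.sqrt ((1 - a * v) ^ 2 + b ^ 2)))
      (nhdsWithin 0 (Set.Ioi 0)) (nhds (π ^ 2)) := by
  have ha0 : (0:ℝ) < a := by linarith
  have h0a : (0:ℝ) < 1 / a := by positivity
  have h1a : (1:ℝ) / a < 1 := by rw [div_lt_one ha0]; exact ha
  constructor
  · -- first limit
    have hne : ∀ᵐ v ∂(volume.restrict (Set.Ioc 0 (1/a))), v ≠ 1/a := by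
      refine ae_restrict_of_ae ?_
      have hset : {v : ℝ | ¬ v ≠ 1/a} = {1/a} := by ext v; simp
      rw [ae_iff, hset]
      exact Real.volume_singleton
    have T1 := dct_piece a (by linarith : (-1:ℝ) ≤ 0) h0a.le h1a.le
      (fun v => (1 / Real.sqrt (1 - v ^ 2)) * π) (by
        filter_upwards [ae_restrict_mem measurableSet_Ioc, hne] with v hv hvne
        refine tendsto_Fc_lt a v ?_
        have hvlt : v < 1/a := lt_of_le_of_ne hv.2 hvne
        have := mul_lt_mul_of_pos_left hvlt ha0
        rwa [mul_one_div_cancel ha0.ne'] at this)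
    have T2 := dct_piece a (le_of_lt (by linarith : (-1:ℝ) < 1/a)) h1a.le le_rfl
      (fun v => (1 / Real.sqrt (1 - v ^ 2)) * 0) (by
        filter_upwards [ae_restrict_mem measurableSet_Ioc] with v hv
        refine tendsto_Fc_gt a v ?_
        have := mul_lt_mul_of_pos_left hv.1 ha0
        rwa [mul_one_div_cancel ha0.ne'] at this)
    have Tsum := (T1.add T2).const_mul (2:ℝ)
    have key : ∀ b : ℝ,
        2 * ((∫ v in (0:ℝ)..(1/a), Fc a b v) + ∫ v in (1/a:ℝ)..1, Fc a b v)
          = 2 * ∫ v in (0:ℝ)..1, Fc a b v := fun b => by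
      rw [intervalIntegral.integral_add_adjacent_intervals
        (intervalIntegrable_Fc a b (by linarith) h0a.le h1a.le)
        (intervalIntegrable_Fc a b (by linarith) h1a.le le_rfl)]
    have Tfin := Tsum.congr key
    have e1 : ∫ v in Set.Ioc 0 (1/a), (1 / Real.sqrt (1 - v ^ 2)) * π
        = Real.arcsin (1/a) * π := by
      rw [← intervalIntegral.integral_of_le h0a.le, intervalIntegral.integral_mul_const,
        integral_arcsinDeriv (by linarith) h0a.le h1a.le, Real.arcsin_zero, sub_zero]
    have e2 : ∫ v in Set.Ioc (1/a) 1, (1 / Real.sqrt (1 - v ^ 2)) * (0:ℝ) = 0 := by simp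
    rw [e1, e2] at Tfin
    have : 2 * (Real.arcsin (1/a) * π + 0) = 2 * π * Real.arcsin (1/a) := by ring
    rwa [this] at Tfin
  · -- second limit
    have T := dct_piece a (c := -1) (d := 0) le_rfl (by linarith) (by linarith)
      (fun v => (1 / Real.sqrt (1 - v ^ 2)) * π) (by
        filter_upwards [ae_restrict_mem measurableSet_Ioc] with v hv
        refine tendsto_Fc_lt a v ?_
        nlinarith [hv.2])
    have Tfin := T.const_mul (2:ℝ)
    have e : ∫ v in Set.Ioc (-1:ℝ) 0, (1 / Real.sqrt (1 - v ^ 2)) * π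
        = (π / 2) * π := by
      rw [← intervalIntegral.integral_of_le (by linarith : (-1:ℝ) ≤ 0),
        intervalIntegral.integral_mul_const,
        integral_arcsinDeriv le_rfl (by linarith) (by linarith),
        Real.arcsin_zero, Real.arcsin_neg_one]
      ring
    rw [e] at Tfin
    have : 2 * ((π / 2) * π) = π ^ 2 := by ring
    rwa [this] at Tfin
end
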